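/- arXiv:2003.05545 — 6 statements merged into one kernel-verified Lean document; each statement's English description precedes it below -/
import Mathlib

section
/- In particular, U(X|Y) = V(X|Y) if and only if the map y ↦ H(P_{X|Y=y}) is P_Y-almost surely constant (equal to H(X|Y)). -/
/-- Per-fiber bias-variance decomposition. -/
lemma fiber_id {X : Type*} (p a : X → ℝ) (pYy c d : ℝ)
    (hps : Summable p) (hpsum : ∑' x, p x = pYy)
    (hpa : Summable fun x => p x * a x)
    (hpc : ∑' x, p x * a x = pYy * c)
    (hq : Summable fun x => p x * (a x - d) ^ 2) :
    (Summable fun x => p x * (a x - c) ^ 2) ∧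
      ∑' x, p x * (a x - d) ^ 2 = (∑' x, p x * (a x - c) ^ 2) + pYy * (c - d) ^ 2 := by
  have key : ∀ x, p x * (a x - c) ^ 2
      = p x * (a x - d) ^ 2 - 2 * (c - d) * (p x * a x) + ((c - d) * (c + d)) * p x := by
    intro x; ring
  have hsc : Summable fun x => p x * (a x - c) ^ 2 := by
    rw [funext key]
    exact (hq.sub (hpa.mul_left _)).add (hps.mul_left _)
  refine ⟨hsc, ?_⟩
  have : ∑' x, p x * (a x - c) ^ 2
      = (∑' x, p x * (a x - d) ^ 2) - 2 * (c - d) * (∑' x, p x * a x)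
        + ((c - d) * (c + d)) * (∑' x, p x) := by
    rw [funext key, Summable.tsum_add (hq.sub (hpa.mul_left _)) (hps.mul_left _),
      Summable.tsum_sub hq (hpa.mul_left _), tsum_mul_left, tsum_mul_left]
  rw [this, hpc, hpsum]; ring

/-- Law of total variance for the conditional information density:
`U(X|Y) = V(X|Y) + ∑_y P_Y(y) (H(X|Y) − H(P_{X|Y=y}))²`. -/
theorem cond_entropy_variance_eq_iff
    {X Y : Type*} [Countable X] [Countable Y]
    (p : X → Y → ℝ) (pY : Y → ℝ)
    (hp : ∀ x y, 0 ≤ p x y)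
    (hpY : ∀ y, pY y = ∑' x, p x y)
    (hpYpos : ∀ y, 0 < pY y)
    (hsum : ∑' y, pY y = 1)
    (HXY U V : ℝ) (Hy : Y → ℝ)
    (hH : HXY = ∑' y, ∑' x, p x y * Real.log (pY y / p x y))
    (hHy : ∀ y, Hy y = ∑' x, (p x y / pY y) * Real.log (pY y / p x y))
    (hU : U = ∑' y, ∑' x, p x y * (Real.log (pY y / p x y) - HXY) ^ 2)
    (hV : V = ∑' y, pY y * ∑' x, (p x y / pY y) * (Real.log (pY y / p x y) - Hy y) ^ 2)
    (hHsum : Summable fun z : Y × X => p z.2 z.1 * Real.log (pY z.1 / p z.2 z.1))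
    (hUsum : Summable fun z : Y × X => p z.2 z.1 * (Real.log (pY z.1 / p z.2 z.1) - HXY) ^ 2)
    (hdiff : Summable fun y => pY y * (HXY - Hy y) ^ 2) :
    U = V ↔ ∀ y, Hy y = HXY := by
  have hps : ∀ y, Summable fun x => p x y := by
    intro y
    by_contra h
    exact (hpYpos y).ne' ((hpY y).trans (tsum_eq_zero_of_not_summable h))
  have hpa : ∀ y, Summable fun x => p x y * Real.log (pY y / p x y) :=
    fun y => hHsum.prod_factor y
  have hq : ∀ y, Summable fun x => p x y * (Real.log (pY y / p x y) - HXY) ^ 2 :=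
    fun y => hUsum.prod_factor y
  have hpc : ∀ y, ∑' x, p x y * Real.log (pY y / p x y) = pY y * Hy y := by
    intro y
    have h0 : pY y ≠ 0 := (hpYpos y).ne'
    have h1 : ∀ x, (p x y / pY y) * Real.log (pY y / p x y)
        = (p x y * Real.log (pY y / p x y)) * (pY y)⁻¹ := by
      intro x; rw [div_eq_mul_inv, mul_right_comm]
    rw [hHy y, tsum_congr h1, tsum_mul_right]
    field_simp
  have key := fun y => fiber_id (fun x => p x y) (fun x => Real.log (pY y / p x y))
    (pY y) (Hy y) HXY (hps y) (hpY y).symm (hpa y) (hpc y) (hq y)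
  have hVW : V = ∑' y, ∑' x, p x y * (Real.log (pY y / p x y) - Hy y) ^ 2 := by
    rw [hV]
    refine tsum_congr fun y => ?_
    have h0 : pY y ≠ 0 := (hpYpos y).ne'
    have h1 : ∀ x, (p x y / pY y) * (Real.log (pY y / p x y) - Hy y) ^ 2
        = (p x y * (Real.log (pY y / p x y) - Hy y) ^ 2) * (pY y)⁻¹ := by
      intro x; rw [div_eq_mul_inv, mul_right_comm]
    rw [tsum_congr h1, tsum_mul_right]
    field_simp
  have hdiff' : Summable fun y => pY y * (Hy y - HXY) ^ 2 := by
    have : (fun y => pY y * (Hy y - HXY) ^ 2) = fun y => pY y * (HXY - Hy y) ^ 2 :=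
      funext fun y => by ring
    rw [this]; exact hdiff
  have hQs : Summable fun y => ∑' x, p x y * (Real.log (pY y / p x y) - HXY) ^ 2 :=
    ((summable_prod_of_nonneg fun z => mul_nonneg (hp _ _) (sq_nonneg _)).1 hUsum).2
  have hWs : Summable fun y => ∑' x, p x y * (Real.log (pY y / p x y) - Hy y) ^ 2 := by
    have heq : (fun y => ∑' x, p x y * (Real.log (pY y / p x y) - Hy y) ^ 2)
        = fun y => (∑' x, p x y * (Real.log (pY y / p x y) - HXY) ^ 2)
          - pY y * (Hy y - HXY) ^ 2 := funext fun y => by rw [(key y).2]; ring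
    rw [heq]; exact hQs.sub hdiff'
  have hS : U = V + ∑' y, pY y * (Hy y - HXY) ^ 2 := by
    rw [hU, hVW, tsum_congr fun y => (key y).2, Summable.tsum_add hWs hdiff']
  constructor
  · intro hUV y
    have hS0 : ∑' y, pY y * (Hy y - HXY) ^ 2 = 0 := by
      rw [hUV] at hS; linarith
    by_contra hne
    have hterm : 0 < pY y * (Hy y - HXY) ^ 2 :=
      mul_pos (hpYpos y)
        (lt_of_le_of_ne (sq_nonneg _) (Ne.symm (pow_ne_zero 2 (sub_ne_zero.mpr hne))))
    exact absurd hS0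
      (Summable.tsum_pos hdiff' (fun y => mul_nonneg (hpYpos y).le (sq_nonneg _)) y hterm).ne'
  · intro h
    have hz : ∀ y, pY y * (Hy y - HXY) ^ 2 = 0 := fun y => by rw [h y]; ring
    rw [hS, tsum_congr hz, tsum_zero, add_zero]
end

section
/- Sandwich between conditional entropies: Fix 0 < α < 1 and let (X,Y) be a pair of discrete random variables on countable alphabets. Define H^{(α)}(X|Y) = (α/(1−α)) log(∑_y P_Y(y) exp(((1−α)/α) H(P_{X|Y=y}))) and Arimoto's conditional Rényi entropy H_α(X|Y) = (α/(1−α)) log(∑_y (∑_x P_{X,Y}(x,y)^α)^{1/α}). Then H(X|Y) ≤ H^{(α)}(X|Y) ≤ H_α(X|Y), where H(X|Y) is the Shannon conditional entropy. -/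
/-!
Each fibre entropy is at most the corresponding Rényi entropy: Jensen for the convex map
`t ↦ b ^ t` with weights `q x` and points `(1 - α) logb b (q x)⁻¹` gives
`b ^ ((1 - α) H(q)) ≤ ∑ q x ^ α`, and this yields the upper inequality summand by summand.
The lower inequality is Jensen once more, now over `y` with weights `P_Y(y)`, because
`H(X|Y)` is the `P_Y`-average of the fibre entropies.
-/

open Real

namespace Real

variable {ι : Type*}

theorem exp_tsum_mul_le_tsum_mul_exp {w t : ι → ℝ} (hw : ∀ i, 0 ≤ w i)
    (hw1 : ∑' i, w i = 1) (hwt : Summable fun i => w i * t i)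
    (hwe : Summable fun i => w i * exp (t i)) :
    exp (∑' i, w i * t i) ≤ ∑' i, w i * exp (t i) := by
  have hws : Summable w := by
    by_contra h
    simp [tsum_eq_zero_of_not_summable h] at hw1
  set M := ∑' i, w i * t i
  -- the tangent line of `exp` at `M` lies below `exp`, and its `w`-average is `exp M`
  have htangent : ∀ i, exp M * ((1 - M) * w i + w i * t i) ≤ w i * exp (t i) := by
    intro i
    have h := mul_le_mul_of_nonneg_left (add_one_le_exp (t i - M)) (exp_pos M).le
    rw [← exp_add, add_sub_cancel] at h
    linarith [mul_le_mul_of_nonneg_left h (hw i)]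
  calc exp M = ∑' i, exp M * ((1 - M) * w i + w i * t i) := by
        rw [tsum_mul_left, (hws.mul_left _).tsum_add hwt, tsum_mul_left, hw1]
        ring
    _ ≤ ∑' i, w i * exp (t i) :=
        ((hws.mul_left _).add hwt).mul_left _ |>.tsum_le_tsum htangent hwe

theorem rpow_tsum_mul_le_tsum_mul_rpow {b : ℝ} (hb : 0 < b) {w t : ι → ℝ}
    (hw : ∀ i, 0 ≤ w i) (hw1 : ∑' i, w i = 1) (hwt : Summable fun i => w i * t i)
    (hwb : Summable fun i => w i * b ^ t i) :
    b ^ (∑' i, w i * t i) ≤ ∑' i, w i * b ^ t i := by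
  have hwt' : Summable fun i => w i * (log b * t i) :=
    (hwt.mul_left (log b)).congr fun i => by ring
  simp only [rpow_def_of_pos hb] at hwb ⊢
  rw [← tsum_mul_left]
  simpa only [mul_left_comm (log b)] using exp_tsum_mul_le_tsum_mul_exp hw hw1 hwt' hwb

theorem mul_rpow_mul_logb_inv {b α x : ℝ} (hb : 0 < b) (hb1 : b ≠ 1) (hα : α ≠ 0)
    (hx : 0 ≤ x) :
    x * b ^ ((1 - α) * logb b x⁻¹) = x ^ α := by
  rcases hx.eq_or_lt with rfl | hx
  · simp [zero_rpow hα]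
  rw [mul_comm (1 - α), rpow_mul hb.le, rpow_logb hb hb1 (inv_pos.mpr hx), inv_rpow hx.le,
    ← rpow_neg hx.le, ← rpow_one_add' hx.le (by simp [hα])]
  ring_nf

theorem mul_logb_div_nonneg {b x s : ℝ} (hb : 1 < b) (hx : 0 ≤ x) (hxs : x ≤ s) :
    0 ≤ x * logb b (s / x) := by
  rcases hx.eq_or_lt with rfl | hx
  · simp
  exact mul_nonneg hx.le (logb_nonneg hb ((one_le_div hx).mpr hxs))

end Real

section Entropy

variable {ι : Type*}

/-- The exponentiated form of `H(q) ≤ H_α(q)` for a probability vector `q`. -/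
theorem rpow_mul_entropy_le_tsum_rpow {b α : ℝ} (hb : 0 < b) (hb1 : b ≠ 1) (hα : α ≠ 0)
    {q : ι → ℝ} (hq : ∀ i, 0 ≤ q i) (hq1 : ∑' i, q i = 1)
    (hH : Summable fun i => q i * logb b (q i)⁻¹) (hqα : Summable fun i => q i ^ α) :
    b ^ ((1 - α) * ∑' i, q i * logb b (q i)⁻¹) ≤ ∑' i, q i ^ α := by
  have hterm (i : ι) := mul_rpow_mul_logb_inv hb hb1 hα (hq i)
  have hJensen := rpow_tsum_mul_le_tsum_mul_rpow hb hq hq1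
    ((hH.mul_left (1 - α)).congr fun i => mul_left_comm _ _ _) (hqα.congr fun i => (hterm i).symm)
  rwa [tsum_congr hterm, tsum_congr fun i => mul_left_comm (q i) (1 - α) _, tsum_mul_left]
    at hJensen

theorem mul_rpow_entropy_le_rpow_tsum_rpow {b α s : ℝ} (hb : 0 < b) (hb1 : b ≠ 1)
    (hα : 0 < α) {p : ι → ℝ} (hp : ∀ i, 0 ≤ p i) (hps : ∑' i, p i = s) (hs : 0 < s)
    (hH : Summable fun i => p i * logb b (s / p i)) (hpα : Summable fun i => p i ^ α) :
    s * b ^ ((1 - α) / α * ∑' i, p i / s * logb b (s / p i)) ≤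
      (∑' i, p i ^ α) ^ (1 / α) := by
  set H := ∑' i, p i / s * logb b (s / p i)
  have hpowdiv (i : ι) : (p i / s) ^ α = p i ^ α / s ^ α := div_rpow (hp i) hs.le α
  have hrenyi := rpow_mul_entropy_le_tsum_rpow hb hb1 hα.ne' (q := fun i => p i / s)
    (fun i => div_nonneg (hp i) hs.le) (by rw [tsum_div_const, hps, div_self hs.ne'])
    ((hH.div_const s).congr fun i => by rw [inv_div, div_mul_eq_mul_div])
    ((hpα.div_const _).congr fun i => (hpowdiv i).symm)
  simp only [inv_div] at hrenyi
  rw [tsum_congr hpowdiv, tsum_div_const, le_div_iff₀ (rpow_pos_of_pos hs α), mul_comm] at hrenyi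
  calc s * b ^ ((1 - α) / α * H) = (s ^ α * b ^ ((1 - α) * H)) ^ (1 / α) := by
        rw [mul_rpow (by positivity) (by positivity), ← rpow_mul hs.le, ← rpow_mul hb.le,
          mul_one_div_cancel hα.ne', rpow_one, mul_one_div, div_mul_eq_mul_div]
    _ ≤ (∑' i, p i ^ α) ^ (1 / α) := by gcongr

theorem summable_tsum_mul_logb_div {κ : Type*} {b : ℝ} (hb : 1 < b) {p : ι → κ → ℝ}
    {s : κ → ℝ} (hp : ∀ i k, 0 ≤ p i k) (hps : ∀ k, ∑' i, p i k = s k)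
    (hs : ∀ k, 0 < s k)
    (hsum : Summable fun z : κ × ι => p z.2 z.1 * logb b (s z.1 / p z.2 z.1)) :
    Summable fun k => ∑' i, p i k * logb b (s k / p i k) := by
  have hps_summable (k : κ) : Summable fun i => p i k := by
    by_contra h
    exact (hs k).ne' (by rw [← hps, tsum_eq_zero_of_not_summable h])
  have hnonneg : 0 ≤ fun z : κ × ι => p z.2 z.1 * logb b (s z.1 / p z.2 z.1) :=
    fun ⟨k, i⟩ => mul_logb_div_nonneg hb (hp i k)
      (hps k ▸ (hps_summable k).le_tsum i fun j _ => hp j k)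
  exact ((summable_prod_of_nonneg hnonneg).mp hsum).2

end Entropy

theorem conditional_entropy_sandwich_general
    {X Y : Type*}
    (p : X → Y → ℝ) (pY : Y → ℝ) (α : ℝ)
    (hα0 : 0 < α) (hα1 : α < 1)
    (hp : ∀ x y, 0 ≤ p x y)
    (hpY : ∀ y, pY y = ∑' x, p x y)
    (hpYpos : ∀ y, 0 < pY y)
    (hsum : ∑' y, pY y = 1)
    (HXY : ℝ) (Hy : Y → ℝ) (HαKN HαA : ℝ)
    (hH : HXY = ∑' y, ∑' x, p x y * Real.logb 2 (pY y / p x y))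
    (hHy : ∀ y, Hy y = ∑' x, (p x y / pY y) * Real.logb 2 (pY y / p x y))
    (hKN : HαKN = (α / (1 - α)) *
      Real.logb 2 (∑' y, pY y * (2 : ℝ) ^ (((1 - α) / α) * Hy y)))
    (hA : HαA = (α / (1 - α)) *
      Real.logb 2 (∑' y, (∑' x, p x y ^ α) ^ (1 / α)))
    (hs1 : Summable fun z : Y × X => p z.2 z.1 * Real.logb 2 (pY z.1 / p z.2 z.1))
    (hs2 : Summable fun y => pY y * (2 : ℝ) ^ (((1 - α) / α) * Hy y))
    (hs3 : ∀ y, Summable fun x => p x y ^ α)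
    (hs4 : Summable fun y => (∑' x, p x y ^ α) ^ (1 / α)) :
    HXY ≤ HαKN ∧ HαKN ≤ HαA := by
  have hc : 0 < (1 - α) / α := div_pos (by linarith) hα0
  have hfibre (y : Y) : pY y * Hy y = ∑' x, p x y * logb 2 (pY y / p x y) := by
    rw [hHy, ← tsum_mul_left]
    exact tsum_congr fun x => by rw [← mul_assoc, mul_div_cancel₀ _ (hpYpos y).ne']
  have hchain : ∑' y, pY y * ((1 - α) / α * Hy y) = (1 - α) / α * HXY := by
    simp only [mul_left_comm (pY _), tsum_mul_left, hfibre, hH]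
  have hchain_summable : Summable fun y => pY y * ((1 - α) / α * Hy y) :=
    ((summable_tsum_mul_logb_div one_lt_two hp (fun y => (hpY y).symm) hpYpos hs1).mul_left
      ((1 - α) / α)).congr fun y => by rw [mul_left_comm, hfibre]
  have hJensen := rpow_tsum_mul_le_tsum_mul_rpow two_pos (fun y => (hpYpos y).le) hsum
    hchain_summable hs2
  rw [hchain] at hJensen
  have hfibre_le (y : Y) :
      pY y * (2 : ℝ) ^ ((1 - α) / α * Hy y) ≤ (∑' x, p x y ^ α) ^ (1 / α) := by
    rw [hHy]
    exact mul_rpow_entropy_le_rpow_tsum_rpow two_pos (by norm_num) hα0 (hp · y) (hpY y).symm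
      (hpYpos y) (hs1.prod_factor y) (hs3 y)
  have hKN_pos := (rpow_pos_of_pos two_pos _).trans_le hJensen
  refine ⟨?_, ?_⟩
  · rw [hKN, ← inv_div, le_inv_mul_iff₀ hc, le_logb_iff_rpow_le one_lt_two hKN_pos]
    exact hJensen
  · rw [hKN, hA]
    exact mul_le_mul_of_nonneg_left
      (logb_le_logb_of_le one_lt_two hKN_pos (hs2.tsum_le_tsum hfibre_le hs4))
      (div_pos hα0 (by linarith)).le

/-- Sandwich `H(X|Y) ≤ H^{(α)}(X|Y) ≤ H_α(X|Y)` between the Shannon conditional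
entropy, the `α`-averaged conditional Shannon entropy, and Arimoto's conditional
Rényi entropy, for `0 < α < 1` (base-2 logarithms/exponentials). -/
theorem conditional_entropy_sandwich
    {X Y : Type*} [Countable X] [Countable Y]
    (p : X → Y → ℝ) (pY : Y → ℝ) (α : ℝ)
    (hα0 : 0 < α) (hα1 : α < 1)
    (hp : ∀ x y, 0 ≤ p x y)
    (hpY : ∀ y, pY y = ∑' x, p x y)
    (hpYpos : ∀ y, 0 < pY y)
    (hsum : ∑' y, pY y = 1)
    (HXY : ℝ) (Hy : Y → ℝ) (HαKN HαA : ℝ)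
    (hH : HXY = ∑' y, ∑' x, p x y * Real.logb 2 (pY y / p x y))
    (hHy : ∀ y, Hy y = ∑' x, (p x y / pY y) * Real.logb 2 (pY y / p x y))
    (hKN : HαKN = (α / (1 - α)) *
      Real.logb 2 (∑' y, pY y * (2 : ℝ) ^ (((1 - α) / α) * Hy y)))
    (hA : HαA = (α / (1 - α)) *
      Real.logb 2 (∑' y, (∑' x, p x y ^ α) ^ (1 / α)))
    (hs1 : Summable fun z : Y × X => p z.2 z.1 * Real.logb 2 (pY z.1 / p z.2 z.1))
    (hs2 : Summable fun y => pY y * (2 : ℝ) ^ (((1 - α) / α) * Hy y))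
    (hs3 : ∀ y, Summable fun x => p x y ^ α)
    (hs4 : Summable fun y => (∑' x, p x y ^ α) ^ (1 / α)) :
    HXY ≤ HαKN ∧ HαKN ≤ HαA :=
  conditional_entropy_sandwich_general p pY α hα0 hα1 hp hpY hpYpos hsum HXY Hy HαKN HαA hH hHy hKN
    hA hs1 hs2 hs3 hs4
end

section
/- Equality conditions for the sandwich: With 0 < α < 1, H(X|Y) = H^{(α)}(X|Y) holds if and only if U(X|Y) = V(X|Y) (equivalently y ↦ H(P_{X|Y=y}) is constant P_Y-a.s.), and H^{(α)}(X|Y) = H_α(X|Y) holds if and only if V(X|Y) = 0. -/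
/-!
Both equalities are equality cases of Jensen's inequality for the strictly convex function
`t ↦ 2 ^ t`, obtained from the tangent line `2 ^ m * (1 + log 2 * (t - m)) ≤ 2 ^ t`, which is
strict for `t ≠ m`.

With `c = (1 - α) / α`, the weights `P_Y` give `2 ^ (c * H(X|Y)) ≤ E_Y [2 ^ (c * H(X|Y=y))]`,
i.e. `H(X|Y) ≤ H^{(α)}(X|Y)`, with equality iff `y ↦ H(X|Y=y)` is constant. By the law of total
variance `U = V + Var_Y H(X|Y=y)`, this is `U = V`.

For fixed `y`, Jensen with the weights `P(·, y)` applied to `(1 - α) * i(x|y)`, where `i` is the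
information density, gives `P_Y(y) * 2 ^ (c * H(X|Y=y)) ≤ (∑ₓ P(x, y) ^ α) ^ (1 / α)`, with
equality iff `i(·|y) = H(X|Y=y)` on the support of `P(·, y)`. Summing over `y`, the two sides
give `H^{(α)}` and `H_α`, so `H^{(α)} = H_α` iff `i(x|y) = H(X|Y=y)` whenever `P(x, y) > 0`,
which is `V = 0`.
-/

open Real

section Sums

variable {ι κ : Type*}

lemma hasSum_of_tsum_eq_of_ne_zero {M : Type*} [AddCommMonoid M] [TopologicalSpace M]
    {f : ι → M} {a : M} (h : ∑' i, f i = a) (ha : a ≠ 0) : HasSum f a := by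
  have hf : Summable f := by
    by_contra hf
    exact ha (h ▸ tsum_eq_zero_of_not_summable hf)
  exact h ▸ hf.hasSum

lemma HasSum.eq_zero_iff_of_nonneg {f : ι → ℝ} {a : ℝ} (hf : HasSum f a) (h0 : ∀ i, 0 ≤ f i) :
    a = 0 ↔ ∀ i, f i = 0 :=
  ⟨fun ha => funext_iff.mp ((hasSum_zero_iff_of_nonneg h0).mp (ha ▸ hf)),
    fun h => hf.unique ((funext h : f = 0) ▸ hasSum_zero)⟩

lemma tsum_tsum_eq_zero_iff_of_nonneg {f : ι → κ → ℝ} (h : Summable fun i => ∑' j, f i j)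
    (hf : ∀ i, Summable (f i)) (h0 : ∀ i j, 0 ≤ f i j) :
    ∑' i, ∑' j, f i j = 0 ↔ ∀ i j, f i j = 0 := by
  rw [h.hasSum.eq_zero_iff_of_nonneg fun i => tsum_nonneg (h0 i)]
  exact forall_congr' fun i => (hf i).hasSum.eq_zero_iff_of_nonneg (h0 i)

lemma tsum_eq_tsum_iff_of_le {f g : ι → ℝ} (hf : Summable f) (hg : Summable g)
    (h : ∀ i, f i ≤ g i) : ∑' i, f i = ∑' i, g i ↔ ∀ i, f i = g i := by
  rw [eq_comm, ← sub_eq_zero,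
    (hg.hasSum.sub hf.hasSum).eq_zero_iff_of_nonneg fun i => sub_nonneg.mpr (h i)]
  simp only [sub_eq_zero, eq_comm]

lemma mul_tsum_div_mul {c : ℝ} (hc : c ≠ 0) (f g : ι → ℝ) :
    c * ∑' i, f i / c * g i = ∑' i, f i * g i := by
  simp_rw [div_mul_eq_mul_div]
  rw [tsum_div_const, mul_div_cancel₀ _ hc]

lemma hasSum_mul_sub_sq {w f : ι → ℝ} {W a b S : ℝ} (hW : HasSum w W)
    (hf : HasSum (fun i => w i * f i) (a * W)) (hS : HasSum (fun i => w i * (f i - b) ^ 2) S) :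
    HasSum (fun i => w i * (f i - a) ^ 2) (S - W * (b - a) ^ 2) := by
  rw [show S - W * (b - a) ^ 2 = S - 2 * (a - b) * (a * W) + (a - b) * (a + b) * W by ring]
  exact ((hS.sub (hf.mul_left _)).add (hW.mul_left _)).congr_fun fun i => by ring

end Sums

section Tangent

variable {b m t : ℝ}

lemma rpow_eq_rpow_mul_exp (hb : 0 < b) (m t : ℝ) : b ^ t = b ^ m * exp (log b * (t - m)) := by
  rw [rpow_def_of_pos hb, rpow_def_of_pos hb, ← exp_add]
  ring_nf

lemma rpow_mul_one_add_log_mul_le_rpow (hb : 0 < b) (m t : ℝ) :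
    b ^ m * (1 + log b * (t - m)) ≤ b ^ t := by
  rw [rpow_eq_rpow_mul_exp hb m t]
  gcongr
  linarith [add_one_le_exp (log b * (t - m))]

lemma rpow_mul_one_add_log_mul_eq_rpow_iff (hb₀ : 0 < b) (hb₁ : b ≠ 1) :
    b ^ m * (1 + log b * (t - m)) = b ^ t ↔ t = m := by
  rw [rpow_eq_rpow_mul_exp hb₀ m t, mul_right_inj' (rpow_pos_of_pos hb₀ m).ne']
  constructor
  · intro h
    by_contra htm
    have hne : log b * (t - m) ≠ 0 :=
      mul_ne_zero (log_ne_zero_of_pos_of_ne_one hb₀ hb₁) (sub_ne_zero.mpr htm)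
    linarith [add_one_lt_exp hne]
  · rintro rfl
    simp

end Tangent

section Jensen

variable {ι : Type*} {w f : ι → ℝ} {b W m E : ℝ}

lemma hasSum_mul_rpow_sub_tangent (hW : HasSum w W) (hf : HasSum (fun i => w i * f i) (m * W))
    (hE : HasSum (fun i => w i * b ^ f i) E) :
    HasSum (fun i => w i * (b ^ f i - b ^ m * (1 + log b * (f i - m)))) (E - W * b ^ m) := by
  rw [show E - W * b ^ m = E - (b ^ m * W + b ^ m * log b * (m * W - m * W)) by ring]
  exact (hE.sub ((hW.mul_left _).add ((hf.sub (hW.mul_left m)).mul_left _))).congr_fun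
    fun i => by ring

lemma mul_rpow_sub_tangent_nonneg (hb : 0 < b) (hw : ∀ i, 0 ≤ w i) (i : ι) :
    0 ≤ w i * (b ^ f i - b ^ m * (1 + log b * (f i - m))) :=
  mul_nonneg (hw i) (sub_nonneg.mpr (rpow_mul_one_add_log_mul_le_rpow hb m (f i)))

theorem mul_rpow_le_of_hasSum (hb : 0 < b) (hw : ∀ i, 0 ≤ w i) (hW : HasSum w W)
    (hf : HasSum (fun i => w i * f i) (m * W)) (hE : HasSum (fun i => w i * b ^ f i) E) :
    W * b ^ m ≤ E :=
  sub_nonneg.mp <| (hasSum_mul_rpow_sub_tangent hW hf hE).nonneg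
    (mul_rpow_sub_tangent_nonneg hb hw)

theorem mul_rpow_eq_iff_of_hasSum (hb₀ : 0 < b) (hb₁ : b ≠ 1) (hw : ∀ i, 0 ≤ w i)
    (hW : HasSum w W) (hf : HasSum (fun i => w i * f i) (m * W))
    (hE : HasSum (fun i => w i * b ^ f i) E) :
    W * b ^ m = E ↔ ∀ i, w i = 0 ∨ f i = m := by
  rw [eq_comm, ← sub_eq_zero, (hasSum_mul_rpow_sub_tangent hW hf hE).eq_zero_iff_of_nonneg
    (mul_rpow_sub_tangent_nonneg hb₀ hw)]
  simp only [mul_eq_zero, sub_eq_zero, eq_comm (a := b ^ f _),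
    rpow_mul_one_add_log_mul_eq_rpow_iff hb₀ hb₁]

end Jensen

theorem eq_inv_mul_logb_tsum_mul_two_rpow_iff {ι : Type*} {w f : ι → ℝ} {μ c : ℝ} (hc : c ≠ 0)
    (hw : ∀ i, 0 < w i) (hW : HasSum w 1) (hf : HasSum (fun i => w i * f i) μ)
    (hE : Summable fun i => w i * 2 ^ (c * f i)) :
    μ = c⁻¹ * logb 2 (∑' i, w i * 2 ^ (c * f i)) ↔ ∀ i, f i = μ := by
  have hw₀ i : 0 ≤ w i := (hw i).le
  have hcf : HasSum (fun i => w i * (c * f i)) (c * μ * 1) := by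
    rw [mul_one]
    exact (hf.mul_left c).congr_fun fun i => by ring
  have hle := mul_rpow_le_of_hasSum two_pos hw₀ hW hcf hE.hasSum
  rw [one_mul] at hle
  rw [eq_inv_mul_iff_mul_eq₀ hc, eq_comm,
    logb_eq_iff_rpow_eq two_pos (by norm_num) ((rpow_pos_of_pos two_pos _).trans_le hle),
    ← one_mul (2 ^ (c * μ)),
    mul_rpow_eq_iff_of_hasSum two_pos (by norm_num) hw₀ hW hcf hE.hasSum]
  simp [(hw _).ne', hc]

section Renyi

variable {ι : Type*} {w : ι → ℝ} {W H α : ℝ}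

lemma rpow_eq_rpow_mul_mul_two_rpow_logb {a s : ℝ} (hα : α ≠ 0) (ha : 0 ≤ a) (hs : 0 < s) :
    a ^ α = s ^ (α - 1) * (a * 2 ^ ((1 - α) * logb 2 (s / a))) := by
  rcases ha.eq_or_lt with rfl | ha
  · simp [zero_rpow hα]
  rw [rpow_def_of_pos ha, rpow_def_of_pos hs, rpow_def_of_pos two_pos, logb,
    log_div hs.ne' ha.ne']
  nth_rw 2 [← exp_log ha]
  rw [← exp_add, ← exp_add]
  congr 1
  field_simp
  ring

lemma hasSum_mul_two_rpow_logb (hα : α ≠ 0) (hw : ∀ i, 0 ≤ w i) (hW : 0 < W)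
    (hs : Summable fun i => w i ^ α) :
    HasSum (fun i => w i * 2 ^ ((1 - α) * logb 2 (W / w i))) (W ^ (1 - α) * ∑' i, w i ^ α) :=
  (hs.hasSum.mul_left _).congr_fun fun i => by
    rw [rpow_eq_rpow_mul_mul_two_rpow_logb hα (hw i) hW, ← mul_assoc, ← rpow_add hW]
    simp

lemma mul_two_rpow_eq_rpow_mul (hW : 0 < W) (α H : ℝ) :
    W * 2 ^ H = W ^ (1 - α) * (W ^ α * 2 ^ H) := by
  rw [← mul_assoc, ← rpow_add hW]
  simp

lemma hasSum_mul_mul_logb (hH : HasSum (fun i => w i * logb 2 (W / w i)) (H * W)) :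
    HasSum (fun i => w i * ((1 - α) * logb 2 (W / w i))) ((1 - α) * H * W) := by
  rw [mul_assoc]
  exact (hH.mul_left (1 - α)).congr_fun fun i => by ring

theorem rpow_mul_two_rpow_le_tsum_rpow (hα : α ≠ 0) (hw : ∀ i, 0 ≤ w i) (hW : HasSum w W)
    (hW₀ : 0 < W) (hH : HasSum (fun i => w i * logb 2 (W / w i)) (H * W))
    (hs : Summable fun i => w i ^ α) :
    W ^ α * 2 ^ ((1 - α) * H) ≤ ∑' i, w i ^ α := by
  have h := mul_rpow_le_of_hasSum two_pos hw hW (hasSum_mul_mul_logb hH)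
    (hasSum_mul_two_rpow_logb hα hw hW₀ hs)
  rwa [mul_two_rpow_eq_rpow_mul hW₀ α, mul_le_mul_iff_right₀ (rpow_pos_of_pos hW₀ _)] at h

theorem rpow_mul_two_rpow_eq_tsum_rpow_iff (hα₀ : α ≠ 0) (hα₁ : α ≠ 1) (hw : ∀ i, 0 ≤ w i)
    (hW : HasSum w W) (hW₀ : 0 < W) (hH : HasSum (fun i => w i * logb 2 (W / w i)) (H * W))
    (hs : Summable fun i => w i ^ α) :
    W ^ α * 2 ^ ((1 - α) * H) = ∑' i, w i ^ α ↔ ∀ i, w i = 0 ∨ logb 2 (W / w i) = H := by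
  rw [← mul_right_inj' (rpow_pos_of_pos hW₀ (1 - α)).ne', ← mul_two_rpow_eq_rpow_mul hW₀,
    mul_rpow_eq_iff_of_hasSum two_pos (by norm_num) hw hW (hasSum_mul_mul_logb hH)
      (hasSum_mul_two_rpow_logb hα₀ hw hW₀ hs)]
  simp only [mul_right_inj' (sub_ne_zero.mpr hα₁.symm)]

lemma mul_two_rpow_div_rpow (hW : 0 ≤ W) (hα : α ≠ 0) :
    (W * 2 ^ ((1 - α) / α * H)) ^ α = W ^ α * 2 ^ ((1 - α) * H) := by
  rw [mul_rpow hW (rpow_nonneg zero_le_two _), ← rpow_mul zero_le_two,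
    div_mul_eq_mul_div, div_mul_cancel₀ _ hα]

theorem mul_two_rpow_le_tsum_rpow_rpow (hα : 0 < α) (hw : ∀ i, 0 ≤ w i) (hW : HasSum w W)
    (hW₀ : 0 < W) (hH : HasSum (fun i => w i * logb 2 (W / w i)) (H * W))
    (hs : Summable fun i => w i ^ α) :
    W * 2 ^ ((1 - α) / α * H) ≤ (∑' i, w i ^ α) ^ (1 / α) := by
  rw [one_div,
    le_rpow_inv_iff_of_pos (by positivity) (tsum_nonneg fun i => rpow_nonneg (hw i) α) hα,
    mul_two_rpow_div_rpow hW₀.le hα.ne']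
  exact rpow_mul_two_rpow_le_tsum_rpow hα.ne' hw hW hW₀ hH hs

theorem mul_two_rpow_eq_tsum_rpow_rpow_iff (hα₀ : 0 < α) (hα₁ : α ≠ 1) (hw : ∀ i, 0 ≤ w i)
    (hW : HasSum w W) (hW₀ : 0 < W) (hH : HasSum (fun i => w i * logb 2 (W / w i)) (H * W))
    (hs : Summable fun i => w i ^ α) :
    W * 2 ^ ((1 - α) / α * H) = (∑' i, w i ^ α) ^ (1 / α) ↔
      ∀ i, w i = 0 ∨ logb 2 (W / w i) = H := by
  rw [one_div, eq_rpow_inv (by positivity) (tsum_nonneg fun i => rpow_nonneg (hw i) α) hα₀.ne',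
    mul_two_rpow_div_rpow hW₀.le hα₀.ne']
  exact rpow_mul_two_rpow_eq_tsum_rpow_iff hα₀.ne' hα₁ hw hW hW₀ hH hs

end Renyi

section Conditional

variable {ι κ : Type*} {w f : ι → κ → ℝ} {W μ : κ → ℝ} {m α : ℝ}

theorem tsum_tsum_mul_sub_sq_eq (hW : ∀ j, HasSum (w · j) (W j))
    (hμ : ∀ j, HasSum (fun i => w i j * f i j) (μ j * W j))
    (hU : Summable fun z : κ × ι => w z.2 z.1 * (f z.2 z.1 - m) ^ 2)
    (hB : Summable fun j => W j * (m - μ j) ^ 2) :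
    ∑' j, ∑' i, w i j * (f i j - μ j) ^ 2 =
      ∑' j, ∑' i, w i j * (f i j - m) ^ 2 - ∑' j, W j * (m - μ j) ^ 2 := by
  rw [← hU.prod.tsum_sub hB]
  exact tsum_congr fun j => (hasSum_mul_sub_sq (hW j) (hμ j) (hU.prod_factor j).hasSum).tsum_eq

theorem tsum_tsum_mul_sub_sq_eq_zero_iff (hw : ∀ i j, 0 ≤ w i j)
    (hW : ∀ j, HasSum (w · j) (W j)) (hμ : ∀ j, HasSum (fun i => w i j * f i j) (μ j * W j))
    (hU : Summable fun z : κ × ι => w z.2 z.1 * (f z.2 z.1 - m) ^ 2)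
    (hB : Summable fun j => W j * (m - μ j) ^ 2) :
    ∑' j, ∑' i, w i j * (f i j - μ j) ^ 2 = 0 ↔ ∀ j i, w i j = 0 ∨ f i j = μ j := by
  have hvar j := hasSum_mul_sub_sq (hW j) (hμ j) (hU.prod_factor j).hasSum
  rw [tsum_tsum_eq_zero_iff_of_nonneg ((hU.prod.sub hB).congr fun j => (hvar j).tsum_eq.symm)
    (fun j => (hvar j).summable) fun j i => mul_nonneg (hw i j) (sq_nonneg _)]
  simp_rw [mul_eq_zero, pow_eq_zero_iff two_ne_zero, sub_eq_zero]

theorem logb_tsum_mul_two_rpow_eq_logb_tsum_rpow_iff (hα₀ : 0 < α) (hα₁ : α ≠ 1)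
    (hw : ∀ i j, 0 ≤ w i j) (hW : ∀ j, HasSum (w · j) (W j)) (hW₀ : ∀ j, 0 < W j)
    (hH : ∀ j, HasSum (fun i => w i j * logb 2 (W j / w i j)) (μ j * W j))
    (hs : ∀ j, Summable fun i => w i j ^ α)
    (hG : Summable fun j => W j * 2 ^ ((1 - α) / α * μ j))
    (hT : Summable fun j => (∑' i, w i j ^ α) ^ (1 / α)) :
    logb 2 (∑' j, W j * 2 ^ ((1 - α) / α * μ j)) = logb 2 (∑' j, (∑' i, w i j ^ α) ^ (1 / α)) ↔
      ∀ j i, w i j = 0 ∨ logb 2 (W j / w i j) = μ j := by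
  rcases isEmpty_or_nonempty κ with hκ | ⟨⟨j₀⟩⟩
  · simp
  have hGT j := mul_two_rpow_le_tsum_rpow_rpow hα₀ (hw · j) (hW j) (hW₀ j) (hH j) (hs j)
  have hG₀ : 0 < ∑' j, W j * 2 ^ ((1 - α) / α * μ j) :=
    hG.tsum_pos (fun j => mul_nonneg (hW₀ j).le (rpow_nonneg zero_le_two _)) j₀
      (mul_pos (hW₀ j₀) (rpow_pos_of_pos two_pos _))
  rw [(logb_injOn_pos one_lt_two).eq_iff hG₀ (hG₀.trans_le (hG.tsum_le_tsum hGT hT)),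
    tsum_eq_tsum_iff_of_le hG hT hGT]
  exact forall_congr' fun j =>
    mul_two_rpow_eq_tsum_rpow_rpow_iff hα₀ hα₁ (hw · j) (hW j) (hW₀ j) (hH j) (hs j)

end Conditional

theorem conditional_entropy_sandwich_equality_conditions_general
    {X Y : Type*}
    (p : X → Y → ℝ) (pY : Y → ℝ) (α : ℝ)
    (hα0 : 0 < α) (hα1 : α < 1)
    (hp : ∀ x y, 0 ≤ p x y)
    (hpY : ∀ y, pY y = ∑' x, p x y)
    (hpYpos : ∀ y, 0 < pY y)
    (hsum : ∑' y, pY y = 1)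
    (HXY : ℝ) (Hy : Y → ℝ) (HαKN HαA U V : ℝ)
    (hH : HXY = ∑' y, ∑' x, p x y * Real.logb 2 (pY y / p x y))
    (hHy : ∀ y, Hy y = ∑' x, (p x y / pY y) * Real.logb 2 (pY y / p x y))
    (hKN : HαKN = (α / (1 - α)) *
      Real.logb 2 (∑' y, pY y * (2 : ℝ) ^ (((1 - α) / α) * Hy y)))
    (hA : HαA = (α / (1 - α)) *
      Real.logb 2 (∑' y, (∑' x, p x y ^ α) ^ (1 / α)))
    (hU : U = ∑' y, ∑' x, p x y * (Real.logb 2 (pY y / p x y) - HXY) ^ 2)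
    (hV : V = ∑' y, pY y * ∑' x, (p x y / pY y) * (Real.logb 2 (pY y / p x y) - Hy y) ^ 2)
    (hs1 : Summable fun z : Y × X => p z.2 z.1 * Real.logb 2 (pY z.1 / p z.2 z.1))
    (hs2 : Summable fun y => pY y * (2 : ℝ) ^ (((1 - α) / α) * Hy y))
    (hs3 : ∀ y, Summable fun x => p x y ^ α)
    (hs4 : Summable fun y => (∑' x, p x y ^ α) ^ (1 / α))
    (hs5 : Summable fun z : Y × X => p z.2 z.1 * (Real.logb 2 (pY z.1 / p z.2 z.1) - HXY) ^ 2)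
    (hs6 : Summable fun y => pY y * (HXY - Hy y) ^ 2) :
    (HXY = HαKN ↔ U = V) ∧ (HαKN = HαA ↔ V = 0) := by
  have hp_sum y : HasSum (fun x => p x y) (pY y) :=
    hasSum_of_tsum_eq_of_ne_zero (hpY y).symm (hpYpos y).ne'
  have hent y : HasSum (fun x => p x y * logb 2 (pY y / p x y)) (Hy y * pY y) := by
    rw [hHy y, mul_comm, mul_tsum_div_mul (hpYpos y).ne']
    exact (hs1.prod_factor y).hasSum
  have hHXY : HasSum (fun y => pY y * Hy y) HXY :=
    hH ▸ hs1.prod.hasSum.congr_fun fun y => by rw [mul_comm, (hent y).tsum_eq]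
  have hV' : V = ∑' y, ∑' x, p x y * (logb 2 (pY y / p x y) - Hy y) ^ 2 :=
    hV ▸ tsum_congr fun y => mul_tsum_div_mul (hpYpos y).ne' _ _
  have hKN_iff : HXY = HαKN ↔ ∀ y, Hy y = HXY := by
    rw [hKN, ← inv_div]
    exact eq_inv_mul_logb_tsum_mul_two_rpow_iff (div_pos (sub_pos.mpr hα1) hα0).ne' hpYpos
      (hasSum_of_tsum_eq_of_ne_zero hsum one_ne_zero) hHXY hs2
  have hUV_iff : U = V ↔ ∀ y, Hy y = HXY := by
    rw [hV', tsum_tsum_mul_sub_sq_eq hp_sum hent hs5 hs6, ← hU, eq_comm, sub_eq_self,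
      hs6.hasSum.eq_zero_iff_of_nonneg fun y => mul_nonneg (hpYpos y).le (sq_nonneg _)]
    simp [(hpYpos _).ne', sub_eq_zero, eq_comm]
  have hA_iff : HαKN = HαA ↔ ∀ y x, p x y = 0 ∨ logb 2 (pY y / p x y) = Hy y := by
    rw [hKN, hA, mul_right_inj' (div_pos hα0 (sub_pos.mpr hα1)).ne']
    exact logb_tsum_mul_two_rpow_eq_logb_tsum_rpow_iff hα0 hα1.ne hp hp_sum hpYpos hent hs3 hs2 hs4
  have hV_iff : V = 0 ↔ ∀ y x, p x y = 0 ∨ logb 2 (pY y / p x y) = Hy y :=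
    hV' ▸ tsum_tsum_mul_sub_sq_eq_zero_iff hp hp_sum hent hs5 hs6
  exact ⟨hKN_iff.trans hUV_iff.symm, hA_iff.trans hV_iff.symm⟩

/-- Equality conditions in the sandwich `H(X|Y) ≤ H^{(α)}(X|Y) ≤ H_α(X|Y)`:
the first is an equality iff `U(X|Y) = V(X|Y)`, the second iff `V(X|Y) = 0`. -/
theorem conditional_entropy_sandwich_equality_conditions
    {X Y : Type*} [Countable X] [Countable Y]
    (p : X → Y → ℝ) (pY : Y → ℝ) (α : ℝ)
    (hα0 : 0 < α) (hα1 : α < 1)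
    (hp : ∀ x y, 0 ≤ p x y)
    (hpY : ∀ y, pY y = ∑' x, p x y)
    (hpYpos : ∀ y, 0 < pY y)
    (hsum : ∑' y, pY y = 1)
    (HXY : ℝ) (Hy : Y → ℝ) (HαKN HαA U V : ℝ)
    (hH : HXY = ∑' y, ∑' x, p x y * Real.logb 2 (pY y / p x y))
    (hHy : ∀ y, Hy y = ∑' x, (p x y / pY y) * Real.logb 2 (pY y / p x y))
    (hKN : HαKN = (α / (1 - α)) *
      Real.logb 2 (∑' y, pY y * (2 : ℝ) ^ (((1 - α) / α) * Hy y)))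
    (hA : HαA = (α / (1 - α)) *
      Real.logb 2 (∑' y, (∑' x, p x y ^ α) ^ (1 / α)))
    (hU : U = ∑' y, ∑' x, p x y * (Real.logb 2 (pY y / p x y) - HXY) ^ 2)
    (hV : V = ∑' y, pY y * ∑' x, (p x y / pY y) * (Real.logb 2 (pY y / p x y) - Hy y) ^ 2)
    (hs1 : Summable fun z : Y × X => p z.2 z.1 * Real.logb 2 (pY z.1 / p z.2 z.1))
    (hs2 : Summable fun y => pY y * (2 : ℝ) ^ (((1 - α) / α) * Hy y))
    (hs3 : ∀ y, Summable fun x => p x y ^ α)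
    (hs4 : Summable fun y => (∑' x, p x y ^ α) ^ (1 / α))
    (hs5 : Summable fun z : Y × X => p z.2 z.1 * (Real.logb 2 (pY z.1 / p z.2 z.1) - HXY) ^ 2)
    (hs6 : Summable fun y => pY y * (HXY - Hy y) ^ 2) :
    (HXY = HαKN ↔ U = V) ∧ (HαKN = HαA ↔ V = 0) :=
  conditional_entropy_sandwich_equality_conditions_general p pY α hα0 hα1 hp hpY hpYpos hsum HXY Hy
    HαKN HαA U V hH hHy hKN hA hU hV hs1 hs2 hs3 hs4 hs5 hs6
end

section
/- Koga's formula for the smooth Rényi entropy: Let P be a pmf on a countable set 𝒳, let 0 < α < 1 and 0 ≤ ε < 1. Let 𝒜 ⊊ 𝒳 be a set of highest-probability elements satisfying: (i) if x₁ ∈ 𝒜 and x₂ ∉ 𝒜 then P(x₁) ≥ P(x₂), and (ii) P(𝒜) < 1 − ε ≤ P(𝒜) + max_{x ∉ 𝒜} P(x). Then the ε-smooth Rényi entropy H_α^ε(P) := (1/(1−α)) log( inf_{Q ∈ B^ε(P)} ∑_x Q(x)^α ), where B^ε(P) = {Q : 0 ≤ Q(x) ≤ P(x) for all x, ∑_x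 Q(x) ≥ 1 − ε}, equals (1/(1−α)) log( ∑_{x ∈ 𝒜} P(x)^α + (1 − ε − P(𝒜))^α ). -/
/-- The set of achievable values `∑_x Q(x)^α` for sub-distributions `Q` dominated by `P`
with total mass at least `1 − ε` (the feasible set of the smooth Rényi entropy). -/
def smoothRenyiVals {X : Type*} (α ε : ℝ) (P : X → ℝ) : Set ℝ :=
  {s | ∃ Q : X → ℝ, (∀ x, 0 ≤ Q x ∧ Q x ≤ P x) ∧ 1 - ε ≤ ∑' x, Q x ∧
    Summable (fun x => Q x ^ α) ∧ s = ∑' x, Q x ^ α}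

/-!
Let `p = max_{x ∉ 𝒜} P x` (attained, since `P` tends to `0`) and `c = 1 − ε − P(𝒜) ∈ (0, p]`.
Keeping `P` on `𝒜` and putting mass `c` on a maximiser of `P` outside `𝒜` is feasible and
gives the value on the right. For optimality, concavity of `f t = t ^ α` provides a minorant
`ℓ t = a · min t c + b · t` (`a, b ≥ 0`) of `f` on `[0, p]` that touches `f` at `c` and such that
`f − ℓ` can only grow when a value `P x ≥ p` is lowered to `Q x`. This reduces the claim to
`∑ ℓ(P|𝒜) + ℓ c ≤ ∑ ℓ ∘ Q`, i.e. to the mass constraint and the counting estimate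
`(|𝒜| + 1) · c ≤ ∑ min (Q x) c`.
-/

open Set Filter Topology

theorem Filter.Tendsto.finite_setOf_le {X : Type*} {f : X → ℝ} (hf : Tendsto f cofinite (𝓝 0))
    {r : ℝ} (hr : 0 < r) : {x | r ≤ f x}.Finite := by
  simpa only [not_lt] using eventually_cofinite.1 (hf.eventually_lt_const hr)

theorem Filter.Tendsto.exists_isMaxOn_of_pos {X : Type*} {f : X → ℝ}
    (hf : Tendsto f cofinite (𝓝 0)) {s : Set X} {y : X} (hy : y ∈ s) (hfy : 0 < f y) :
    ∃ x₀ ∈ s, IsMaxOn f s x₀ := by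
  obtain ⟨x₀, ⟨hx₀s, hyx₀⟩, hmax⟩ := Set.exists_max_image {x | x ∈ s ∧ f y ≤ f x} f
    ((hf.finite_setOf_le hfy).subset fun x hx => hx.2) ⟨y, hy, le_rfl⟩
  refine ⟨x₀, hx₀s, isMaxOn_iff.2 fun x hx => ?_⟩
  rcases le_or_gt (f y) (f x) with hxy | hxy
  · exact hmax x ⟨hx, hxy⟩
  · exact hxy.le.trans hyx₀

theorem ConcaveOn.slope_le_slope {𝕜 : Type*} [Field 𝕜] [LinearOrder 𝕜] [IsStrictOrderedRing 𝕜]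
    {s : Set 𝕜} {f : 𝕜 → 𝕜} (hf : ConcaveOn 𝕜 s f) {a b x y : 𝕜} (ha : a ∈ s) (hb : b ∈ s)
    (hx : x ∈ s) (hy : y ∈ s) (hab : a < b) (hxy : x < y) (hax : a ≤ x) (hby : b ≤ y) :
    slope f x y ≤ slope f a b :=
  calc slope f x y = slope f y x := slope_comm f x y
    _ ≤ slope f y a := hf.slope_anti hy ⟨ha, (hab.trans_le hby).ne⟩ ⟨hx, hxy.ne⟩ hax
    _ = slope f a y := slope_comm f y a
    _ ≤ slope f a b := hf.slope_anti ha ⟨hb, hab.ne'⟩ ⟨hy, (hab.trans_le hby).ne'⟩ hby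

section Minorant

variable {f : ℝ → ℝ} {c p : ℝ}

/-- For `c < p` the slope is that of the chord over `[c, p]`; for `c = p` that chord degenerates,
and the slope `f c / c` of the chord over `[0, c]` takes its place. -/
theorem ConcaveOn.exists_separating_slope (hf : ConcaveOn ℝ (Ici 0) f)
    (hmono : MonotoneOn f (Ici 0)) (hc : 0 < c) (hcp : c ≤ p) :
    ∃ b, 0 ≤ b ∧ b ≤ slope f 0 c ∧ (∀ t, c < t → t ≤ p → b ≤ slope f c t) ∧
      ∀ s t, c ≤ s → s < t → p ≤ t → slope f s t ≤ b := by
  rcases hcp.lt_or_eq with hlt | rfl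
  · refine ⟨slope f c p, hmono.slope_nonneg hc.le (hc.le.trans hcp), ?_,
      fun t hct htp => ?_, fun s t hcs hst hpt => ?_⟩
    · exact hf.slope_le_slope self_mem_Ici hc.le hc.le (hc.le.trans hcp) hc hlt hc.le hcp
    · exact hf.slope_le_slope hc.le (hc.trans hct).le hc.le (hc.le.trans hcp) hct hlt le_rfl htp
    · exact hf.slope_le_slope hc.le (hc.le.trans hcp) (hc.le.trans hcs)
        (hc.le.trans (hcs.trans hst.le)) hlt hst hcs hpt
  · refine ⟨slope f 0 c, hmono.slope_nonneg self_mem_Ici hc.le, le_rfl,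
      fun t hct htp => (hct.not_ge htp).elim, fun s t hcs hst hpt => ?_⟩
    exact hf.slope_le_slope self_mem_Ici hc.le (hc.le.trans hcs) (hc.le.trans (hcs.trans hst.le))
      hc hst (hc.le.trans hcs) hpt

def kinkLinear (a b c t : ℝ) : ℝ := a * min t c + b * t

theorem ConcaveOn.exists_kinkLinear_minorant (hf : ConcaveOn ℝ (Ici 0) f)
    (hmono : MonotoneOn f (Ici 0)) (hf0 : f 0 = 0) (hc : 0 < c) (hcp : c ≤ p) :
    ∃ a b, 0 ≤ a ∧ 0 ≤ b ∧ kinkLinear a b c c = f c ∧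
      (∀ t ∈ Icc 0 p, kinkLinear a b c t ≤ f t) ∧
      ∀ s t, 0 ≤ s → s ≤ t → p ≤ t → f t - kinkLinear a b c t ≤ f s - kinkLinear a b c s := by
  set k := slope f 0 c
  obtain ⟨b, hb0, hbk, hchord, hsteep⟩ := hf.exists_separating_slope hmono hc hcp
  have hkc : k * c = f c := by
    simp only [k, slope_def_field, hf0, sub_zero]
    field_simp
  have hlin : ∀ t ≤ c, kinkLinear (k - b) b c t = k * t := fun t ht => by
    simp only [kinkLinear, min_eq_left ht]
    ring
  have hkink : ∀ t, c ≤ t → kinkLinear (k - b) b c t = f c + b * (t - c) := fun t ht => by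
    simp only [kinkLinear, min_eq_right ht, ← hkc]
    ring
  have hminor : ∀ t ∈ Icc 0 p, kinkLinear (k - b) b c t ≤ f t := by
    rintro t ⟨ht0, htp⟩
    rcases le_or_gt t c with htc | hct
    · rw [hlin t htc]
      rcases ht0.eq_or_lt with rfl | ht0
      · simp [hf0]
      · have : k ≤ slope f 0 t :=
          hf.slope_le_slope self_mem_Ici ht0.le self_mem_Ici hc.le ht0 hc le_rfl htc
        rwa [slope_def_field f 0 t, hf0, sub_zero, sub_zero, le_div_iff₀ ht0] at this
    · have := hchord t hct htp
      rw [slope_def_field, le_div_iff₀ (sub_pos.2 hct)] at this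
      rw [hkink t hct.le]
      linarith
  have hstep : ∀ s t, c ≤ s → s ≤ t → p ≤ t → f t - f s ≤ b * (t - s) := by
    intro s t hcs hst hpt
    rcases hst.eq_or_lt with rfl | hst
    · simp
    · have := hsteep s t hcs hst hpt
      rw [slope_def_field, div_le_iff₀ (sub_pos.2 hst)] at this
      linarith
  refine ⟨k - b, b, sub_nonneg.2 hbk, hb0, by rw [hlin c le_rfl, hkc], hminor,
    fun s t hs hst hpt => ?_⟩
  have hct : c ≤ t := hcp.trans hpt
  rw [hkink t hct]
  rcases le_or_gt c s with hcs | hsc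
  · rw [hkink s hcs]
    linarith [hstep s t hcs hst hpt]
  · linarith [hminor s ⟨hs, hsc.le.trans hcp⟩, hstep c t le_rfl hct hpt]

end Minorant

section LowerBound

variable {X : Type*} {P Q : X → ℝ} {F : Finset X} {p c : ℝ}

theorem card_add_one_mul_le_tsum_min (hQ0 : ∀ x, 0 ≤ Q x) (hQP : ∀ x, Q x ≤ P x)
    (hQ : Summable Q) (hPF : ∀ x ∈ F, p ≤ P x) (hQF : ∀ x ∉ F, Q x ≤ p) (hc : 0 < c)
    (hcp : c ≤ p) (hmass : ∑ x ∈ F, P x + c ≤ ∑' x, Q x) :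
    (F.card + 1) * c ≤ ∑' x, min (Q x) c := by
  classical
  have hmin : Summable fun x => min (Q x) c :=
    hQ.of_nonneg_of_le (fun x => le_min (hQ0 x) hc.le) fun x => min_le_left _ _
  set G := (hQ.tendsto_cofinite_zero.finite_setOf_le hc).toFinset
  have hG : ∀ x, x ∈ G ↔ c ≤ Q x := fun x => Set.Finite.mem_toFinset _
  rcases lt_or_ge F.card G.card with hFG | hGF
  · calc (F.card + 1) * c ≤ G.card * c := by gcongr; exact_mod_cast hFG
      _ = ∑ x ∈ G, min (Q x) c := by
        rw [Finset.sum_congr rfl fun x hx => min_eq_right ((hG x).1 hx)]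
        simp
      _ ≤ ∑' x, min (Q x) c := hmin.sum_le_tsum G fun x _ => le_min (hQ0 x) hc.le
  · have hexcess : ∑' x, Q x - ∑' x, min (Q x) c = ∑ x ∈ G, (Q x - c) := by
      rw [← hQ.tsum_sub hmin, tsum_eq_sum (s := G) fun x hx => ?_]
      · exact Finset.sum_congr rfl fun x hx => by rw [min_eq_right ((hG x).1 hx)]
      · rw [min_eq_left (not_le.1 (mt (hG x).2 hx)).le, sub_self]
    -- the values `≥ c` of `Q` off `F` are at most `p`, and are outnumbered by the values of `P` on
    -- `F \ G`, which are at least `p`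
    have hcard : (G \ F).card ≤ (F \ G).card := Finset.card_sdiff_le_card_sdiff_iff.2 hGF
    have hexcess_le : ∑ x ∈ G, (Q x - c) ≤ ∑ x ∈ F, (P x - c) := by
      rw [← Finset.sum_inter_add_sum_sdiff G F, ← Finset.sum_inter_add_sum_sdiff F G,
        Finset.inter_comm F G]
      gcongr ?_ + ?_
      · exact Finset.sum_le_sum fun x _ => by linarith [hQP x]
      · calc ∑ x ∈ G \ F, (Q x - c) ≤ (G \ F).card • (p - c) :=
            Finset.sum_le_card_nsmul _ _ _ fun x hx => by
              linarith [hQF x (Finset.mem_sdiff.1 hx).2]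
          _ ≤ (F \ G).card • (p - c) := by gcongr
          _ ≤ ∑ x ∈ F \ G, (P x - c) :=
            Finset.card_nsmul_le_sum _ _ _ fun x hx => by
              linarith [hPF x (Finset.mem_sdiff.1 hx).1]
    have hF : ∑ x ∈ F, (P x - c) = ∑ x ∈ F, P x - F.card * c := by
      rw [Finset.sum_sub_distrib, Finset.sum_const, nsmul_eq_mul]
    linarith

theorem sum_add_le_tsum_of_concaveOn {f : ℝ → ℝ} (hf : ConcaveOn ℝ (Ici 0) f)
    (hmono : MonotoneOn f (Ici 0)) (hf0 : f 0 = 0) (hQ0 : ∀ x, 0 ≤ Q x) (hQP : ∀ x, Q x ≤ P x)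
    (hQ : Summable Q) (hfQ : Summable fun x => f (Q x)) (hPF : ∀ x ∈ F, p ≤ P x)
    (hQF : ∀ x ∉ F, Q x ≤ p) (hc : 0 < c) (hcp : c ≤ p)
    (hmass : ∑ x ∈ F, P x + c ≤ ∑' x, Q x) :
    ∑ x ∈ F, f (P x) + f c ≤ ∑' x, f (Q x) := by
  obtain ⟨a, b, ha, hb, hℓc, hminor, hanti⟩ := hf.exists_kinkLinear_minorant hmono hf0 hc hcp
  set ℓ := kinkLinear a b c
  have hmin : Summable fun x => min (Q x) c :=
    hQ.of_nonneg_of_le (fun x => le_min (hQ0 x) hc.le) fun x => min_le_left _ _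
  have hℓQ : Summable fun x => ℓ (Q x) := (hmin.mul_left a).add (hQ.mul_left b)
  have hℓ : ∑ x ∈ F, ℓ (P x) + ℓ c ≤ ∑' x, ℓ (Q x) := by
    have hlayer := card_add_one_mul_le_tsum_min hQ0 hQP hQ hPF hQF hc hcp hmass
    have hPc : ∀ x ∈ F, ℓ (P x) = a * c + b * P x := fun x hx => by
      simp only [ℓ, kinkLinear, min_eq_right (hcp.trans (hPF x hx))]
    calc ∑ x ∈ F, ℓ (P x) + ℓ c = a * ((F.card + 1) * c) + b * (∑ x ∈ F, P x + c) := by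
          rw [Finset.sum_congr rfl hPc, Finset.sum_add_distrib, Finset.sum_const,
            ← Finset.mul_sum, nsmul_eq_mul]
          simp only [ℓ, kinkLinear, min_self]
          ring
      _ ≤ a * ∑' x, min (Q x) c + b * ∑' x, Q x := by gcongr
      _ = ∑' x, ℓ (Q x) := by
          rw [← tsum_mul_left, ← tsum_mul_left, ← (hmin.mul_left a).tsum_add (hQ.mul_left b)]
          rfl
  have hgap : ∑ x ∈ F, (f (P x) - ℓ (P x)) ≤ ∑' x, (f (Q x) - ℓ (Q x)) :=
    calc ∑ x ∈ F, (f (P x) - ℓ (P x)) ≤ ∑ x ∈ F, (f (Q x) - ℓ (Q x)) :=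
          Finset.sum_le_sum fun x hx => hanti _ _ (hQ0 x) (hQP x) (hPF x hx)
      _ ≤ ∑' x, (f (Q x) - ℓ (Q x)) := (hfQ.sub hℓQ).sum_le_tsum F fun x hx =>
          sub_nonneg.2 (hminor _ ⟨hQ0 x, hQF x hx⟩)
  rw [hfQ.tsum_sub hℓQ, Finset.sum_sub_distrib] at hgap
  linarith

end LowerBound

theorem isLeast_smoothRenyiVals {X : Type*} {P : X → ℝ} {α ε p c : ℝ} {F : Finset X} {x₀ : X}
    (hα0 : 0 < α) (hα1 : α < 1) (hP0 : ∀ x, 0 ≤ P x) (hP : Summable P)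
    (hPF : ∀ x ∈ F, p ≤ P x) (hPout : ∀ x ∉ F, P x ≤ p) (hx₀ : x₀ ∉ F) (hcx₀ : c ≤ P x₀)
    (hc : 0 < c) (hcp : c ≤ p) (hmass : ∑ x ∈ F, P x + c = 1 - ε) :
    IsLeast (smoothRenyiVals α ε P) (∑ x ∈ F, P x ^ α + c ^ α) := by
  classical
  set Q : X → ℝ := fun x => if x ∈ F then P x else if x = x₀ then c else 0
  have hasSum_comp : ∀ g : ℝ → ℝ, g 0 = 0 →
      HasSum (fun x => g (Q x)) (∑ x ∈ F, g (P x) + g c) := by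
    intro g hg0
    have : HasSum (fun x => g (Q x)) (∑ x ∈ insert x₀ F, g (Q x)) :=
      hasSum_sum_of_ne_finset_zero fun x hx => by
        rw [Finset.mem_insert, not_or] at hx
        simp [Q, hx.1, hx.2, hg0]
    rwa [Finset.sum_insert hx₀, add_comm,
      Finset.sum_congr rfl fun x hx => show g (Q x) = g (P x) by simp [Q, hx],
      show g (Q x₀) = g c by simp [Q, hx₀]] at this
  have hQα := hasSum_comp (fun t => t ^ α) (Real.zero_rpow hα0.ne')
  have hQ : HasSum Q (∑ x ∈ F, P x + c) := hasSum_comp id rfl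
  refine ⟨⟨Q, fun x => ?_, by rw [hQ.tsum_eq, hmass], hQα.summable, hQα.tsum_eq.symm⟩, ?_⟩
  · by_cases hxF : x ∈ F
    · simp [Q, hxF, hc.le.trans (hcp.trans (hPF x hxF))]
    · by_cases hxx₀ : x = x₀
      · subst hxx₀
        simp [Q, hx₀, hc.le, hcx₀]
      · simp [Q, hxF, hxx₀, hP0 x]
  · rintro s ⟨Q', hQ', hmass', hQ'α, rfl⟩
    exact sum_add_le_tsum_of_concaveOn (Real.concaveOn_rpow hα0.le hα1.le)
      (Real.monotoneOn_rpow_Ici_of_exponent_nonneg hα0.le) (Real.zero_rpow hα0.ne')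
      (fun x => (hQ' x).1) (fun x => (hQ' x).2)
      (hP.of_nonneg_of_le (fun x => (hQ' x).1) fun x => (hQ' x).2) hQ'α hPF
      (fun x hx => (hQ' x).2.trans (hPout x hx)) hc hcp (hmass ▸ hmass')

theorem koga_smooth_renyi_formula_general {X : Type*}
    (P : X → ℝ) (α ε : ℝ) (A : Set X)
    (hα0 : 0 < α) (hα1 : α < 1)
    (hP : ∀ x, 0 ≤ P x) (hsum : HasSum P 1)
    (horder : ∀ x₁ ∈ A, ∀ x₂ ∉ A, P x₂ ≤ P x₁)
    (hlow : ∑' x : A, P x < 1 - ε)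
    (hup : 1 - ε ≤ (∑' x : A, P x) + ⨆ x : ↥Aᶜ, P x) :
    (1 / (1 - α)) * Real.logb 2 (sInf (smoothRenyiVals α ε P)) =
      (1 / (1 - α)) * Real.logb 2
        ((∑' x : A, P x ^ α) + (1 - ε - ∑' x : A, P x) ^ α) := by
  have hdecay := hsum.summable.tendsto_cofinite_zero
  obtain ⟨y, hyA, hy⟩ : ∃ y ∉ A, 0 < P y := by
    by_contra! h
    linarith [Real.iSup_nonpos fun x : ↥Aᶜ => h x x.2]
  obtain ⟨x₀, hx₀A, hmax⟩ := hdecay.exists_isMaxOn_of_pos (s := Aᶜ) hyA hy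
  have : Nonempty ↥Aᶜ := ⟨⟨x₀, hx₀A⟩⟩
  have hsup : ⨆ x : ↥Aᶜ, P x = P x₀ :=
    le_antisymm (ciSup_le fun x => isMaxOn_iff.1 hmax x x.2)
      (le_ciSup (f := fun x : ↥Aᶜ => P x)
        ⟨P x₀, by rintro _ ⟨x, rfl⟩; exact isMaxOn_iff.1 hmax x x.2⟩ ⟨x₀, hx₀A⟩)
  have hA : A.Finite := (hdecay.finite_setOf_le (hy.trans_le (isMaxOn_iff.1 hmax y hyA))).subset
    fun x hx => horder x hx x₀ hx₀A
  obtain ⟨F, rfl⟩ := hA.exists_finset_coe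
  rw [hsup] at hup
  rw [Finset.tsum_subtype' F fun x => P x ^ α]
  rw [Finset.tsum_subtype' F P] at hlow hup ⊢
  have hcp : 1 - ε - ∑ x ∈ F, P x ≤ P x₀ := by linarith
  rw [(isLeast_smoothRenyiVals hα0 hα1 hP hsum.summable (fun x hx => horder x hx x₀ hx₀A)
    (fun x hx => isMaxOn_iff.1 hmax x hx) hx₀A hcp (by linarith) hcp (by ring)).csInf_eq]

/-- Koga's formula: the `ε`-smooth Rényi entropy of order `0 < α < 1` equals
`(1/(1−α)) log₂ (∑_{x∈𝒜} P(x)^α + (1 − ε − P(𝒜))^α)`, where `𝒜` collects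
highest-probability elements with `P(𝒜) < 1−ε ≤ P(𝒜) + max_{x∉𝒜} P(x)`. -/
theorem koga_smooth_renyi_formula {X : Type*} [Countable X]
    (P : X → ℝ) (α ε : ℝ) (A : Set X)
    (hα0 : 0 < α) (hα1 : α < 1) (hε0 : 0 ≤ ε) (hε1 : ε < 1)
    (hP : ∀ x, 0 ≤ P x) (hsum : HasSum P 1)
    (hsummα : Summable fun x => P x ^ α)
    (hAne : A ≠ Set.univ)
    (horder : ∀ x₁ ∈ A, ∀ x₂ ∉ A, P x₂ ≤ P x₁)
    (hlow : ∑' x : A, P x < 1 - ε)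
    (hup : 1 - ε ≤ (∑' x : A, P x) + ⨆ x : ↥Aᶜ, P x) :
    (1 / (1 - α)) * Real.logb 2 (sInf (smoothRenyiVals α ε P)) =
      (1 / (1 - α)) * Real.logb 2
        ((∑' x : A, P x ^ α) + (1 - ε - ∑' x : A, P x) ^ α) :=
  koga_smooth_renyi_formula_general P α ε A hα0 hα1 hP hsum horder hlow hup
end

section
/- Fix 0 < α < 1 and 0 < ε < 1 and let P be a pmf on a countable set with min-entropy H_∞(P) = log(1/max_x P(x)) > 0. Let M_ε := E[⟨exp((1−α) log(1/P(X)))⟩_ε], where ⟨·⟩_ε denotes the ε-cutoff of the random variable exp((1−α) log(1/P(X))) that removes exactly ε of the probability mass from the largest values. Then (1/(1−α)) log M_ε ≤ H_α^ε(P) ≤ (1/(1−α)) log(M_ε + 1), and moreover, if (1−ε)·exp((1−α)H_∞(P)) > 1, then the upper bound can be replaced by (1/(1−α)) log M_ε + (1/(1−α)) log 2. -/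
set_option maxHeartbeats 2000000


/-- Two-sided one-shot bound relating the smooth Rényi entropy `H_α^ε(P)` to the
`ε`-cutoff moment `M_ε = E[⟨P(X)^{α−1}⟩_ε]`, where the cutoff at level `η` with
randomization `β` removes exactly `ε` of the probability mass from the largest values:
`(1/(1−α)) log₂ M_ε ≤ H_α^ε(P) ≤ (1/(1−α)) log₂ (M_ε + 1)`, and if
`(1−ε)·2^{(1−α)H_∞(P)} > 1` the upper bound improves to
`(1/(1−α)) log₂ M_ε + (1/(1−α)) log₂ 2`. -/
theorem smooth_renyi_cutoff_bounds {X : Type*} [Countable X]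
    (P : X → ℝ) (α ε η β : ℝ)
    (hα0 : 0 < α) (hα1 : α < 1) (hε0 : 0 < ε) (hε1 : ε < 1)
    (hP : ∀ x, 0 ≤ P x) (hsum : HasSum P 1)
    (hβ0 : 0 ≤ β) (hβ1 : β < 1)
    (hηβ : (∑' x, if η < P x ^ (α - 1) then P x else 0) +
        β * (∑' x, if P x ^ (α - 1) = η then P x else 0) = ε)
    (Hinf : ℝ) (hHinf : Hinf = Real.logb 2 (1 / ⨆ x, P x)) (hHinfpos : 0 < Hinf)
    (Mε : ℝ)
    (hM : Mε = ∑' x, P x * (if P x ^ (α - 1) < η then P x ^ (α - 1)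
        else if P x ^ (α - 1) = η then (1 - β) * P x ^ (α - 1) else 0))
    (Hsm : ℝ)
    (hHsm : Hsm = (1 / (1 - α)) * Real.logb 2 (sInf (smoothRenyiVals α ε P))) :
    (1 / (1 - α)) * Real.logb 2 Mε ≤ Hsm ∧
    Hsm ≤ (1 / (1 - α)) * Real.logb 2 (Mε + 1) ∧
    (1 < (1 - ε) * (2 : ℝ) ^ ((1 - α) * Hinf) →
      Hsm ≤ (1 / (1 - α)) * Real.logb 2 Mε + (1 / (1 - α)) * Real.logb 2 2) := by
  classical
  have hα1' : (0:ℝ) < 1 - α := by linarith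
  have hαm1 : α - 1 ≠ 0 := by intro h; linarith [sub_eq_zero.mp h]
  have hαm1' : α - 1 ≤ 0 := by linarith
  set v : X → ℝ := fun x => P x ^ (α - 1) with hv
  have hv0 : ∀ x, 0 ≤ v x := fun x => Real.rpow_nonneg (hP x) _
  have hPsum : Summable P := hsum.summable
  have hP1 : ∀ x, P x ≤ 1 := fun x => le_hasSum hsum x (fun y _ => hP y)
  have hvpos : ∀ x, 0 < P x → 0 < v x := fun x hx => Real.rpow_pos_of_pos hx _
  have hvzero : ∀ x, P x = 0 → v x = 0 := by
    intro x hx; simp only [hv, hx]; exact Real.zero_rpow hαm1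
  -- indicator pieces
  set fA : X → ℝ := fun x => if v x < η then P x else 0 with hfA
  set fE : X → ℝ := fun x => if v x = η then P x else 0 with hfE
  set fG : X → ℝ := fun x => if η < v x then P x else 0 with hfG
  have hfA0 : ∀ x, 0 ≤ fA x := by intro x; simp only [hfA]; split <;> simp [hP x]
  have hfE0 : ∀ x, 0 ≤ fE x := by intro x; simp only [hfE]; split <;> simp [hP x]
  have hfG0 : ∀ x, 0 ≤ fG x := by intro x; simp only [hfG]; split <;> simp [hP x]
  have hfAP : ∀ x, fA x ≤ P x := by intro x; simp only [hfA]; split <;> simp [hP x]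
  have hfEP : ∀ x, fE x ≤ P x := by intro x; simp only [hfE]; split <;> simp [hP x]
  have hfGP : ∀ x, fG x ≤ P x := by intro x; simp only [hfG]; split <;> simp [hP x]
  have hfAs : Summable fA := Summable.of_nonneg_of_le hfA0 hfAP hPsum
  have hfEs : Summable fE := Summable.of_nonneg_of_le hfE0 hfEP hPsum
  have hfGs : Summable fG := Summable.of_nonneg_of_le hfG0 hfGP hPsum
  have hsplit : ∀ x, P x = fA x + fE x + fG x := by
    intro x
    rcases lt_trichotomy (v x) η with h | h | h
    · simp [hfA, hfE, hfG, h, h.ne, not_lt.mpr h.le]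
    · simp [hfE, hfA, hfG, h, lt_irrefl]
    · simp [hfA, hfE, hfG, h, h.ne', not_lt.mpr h.le]
  have htot : (∑' x, fA x) + (∑' x, fE x) + (∑' x, fG x) = 1 := by
    have : ∑' x, P x = ∑' x, (fA x + fE x + fG x) := tsum_congr hsplit
    rw [hsum.tsum_eq] at this
    rw [Summable.tsum_add (hfAs.add hfEs) hfGs, Summable.tsum_add hfAs hfEs] at this
    linarith
  have hηβ' : (∑' x, fG x) + β * (∑' x, fE x) = ε := hηβ
  -- η nonneg
  have hη0 : 0 ≤ η := by
    by_contra h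
    push_neg at h
    have h1 : ∀ x, fG x = P x := by
      intro x; simp only [hfG, if_pos (lt_of_lt_of_le h (hv0 x))]
    have h2 : ∀ x, fE x = 0 := by
      intro x; simp only [hfE]
      rw [if_neg]; intro he; exact absurd (he ▸ hv0 x) (not_le.mpr h)
    have e1 : (∑' x, fG x) = 1 := by rw [tsum_congr h1, hsum.tsum_eq]
    have e2 : (∑' x, fE x) = 0 := by simp [tsum_congr h2]
    rw [e1, e2] at hηβ'
    simp at hηβ'
    linarith
  -- the cutoff sub-distribution w
  set w : X → ℝ := fun x => if v x < η then P x else if v x = η then (1-β) * P x else 0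
    with hwdef
  have hβ1' : (0:ℝ) ≤ 1 - β := by linarith
  have hw0 : ∀ x, 0 ≤ w x := by
    intro x; simp only [hwdef]; split
    · exact hP x
    · split
      · exact mul_nonneg hβ1' (hP x)
      · exact le_refl 0
  have hwP : ∀ x, w x ≤ P x := by
    intro x; simp only [hwdef]; split
    · exact le_refl _
    · split
      · exact mul_le_of_le_one_left (hP x) (by linarith)
      · exact hP x
  have hw_sum : Summable w := Summable.of_nonneg_of_le hw0 hwP hPsum
  have hw_eq : ∀ x, w x = fA x + (1-β) * fE x := by
    intro x
    rcases lt_trichotomy (v x) η with h | h | h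
    · simp [hwdef, hfA, hfE, h, h.ne]
    · simp [hwdef, hfA, hfE, h, lt_irrefl]
    · simp [hwdef, hfA, hfE, h.ne', not_lt.mpr h.le]
  have htsum_w : ∑' x, w x = 1 - ε := by
    rw [tsum_congr hw_eq, Summable.tsum_add hfAs (hfEs.mul_left _), tsum_mul_left]
    linarith
  -- Mε as ∑ w·v
  have hPv : ∀ x, P x * v x = P x ^ α := by
    intro x
    rcases (hP x).eq_or_lt with h | h
    · rw [← h, hvzero x h.symm, mul_zero, Real.zero_rpow hα0.ne']
    · have : P x ^ α = P x ^ (1 + (α - 1)) := by norm_num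
      rw [this, Real.rpow_add h, Real.rpow_one]
  have hMw : Mε = ∑' x, w x * v x := by
    rw [hM]; apply tsum_congr; intro x
    simp only [hwdef, hv]
    split_ifs <;> ring
  have hwv_le : ∀ x, w x * v x ≤ η * P x := by
    intro x
    simp only [hwdef]
    split_ifs with h1 h2
    · rw [mul_comm]; exact mul_le_mul_of_nonneg_right h1.le (hP x)
    · rw [h2]
      have h3 : (1-β) * P x ≤ P x := mul_le_of_le_one_left (hP x) (by linarith)
      calc (1-β) * P x * η ≤ P x * η := mul_le_mul_of_nonneg_right h3 hη0
        _ = η * P x := mul_comm _ _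
    · simp [mul_nonneg hη0 (hP x)]
  have hwv0 : ∀ x, 0 ≤ w x * v x := fun x => mul_nonneg (hw0 x) (hv0 x)
  have hwv_sum : Summable (fun x => w x * v x) :=
    Summable.of_nonneg_of_le hwv0 hwv_le (hPsum.mul_left η)
  have hv_ge_one : ∀ x, 0 < P x → 1 ≤ v x := by
    intro x hx
    exact Real.one_le_rpow_of_pos_of_le_one_of_nonpos hx (hP1 x) hαm1'
  have hwv_ge : ∀ x, w x ≤ w x * v x := by
    intro x
    rcases (hw0 x).eq_or_lt with h | h
    · rw [← h, zero_mul]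
    · have hPx : 0 < P x := lt_of_lt_of_le h (hwP x)
      exact le_mul_of_one_le_right h.le (hv_ge_one x hPx)
  have hMε_ge : 1 - ε ≤ Mε := by
    rw [hMw, ← htsum_w]
    exact Summable.tsum_le_tsum hwv_ge hw_sum hwv_sum
  have hMε_pos : 0 < Mε := lt_of_lt_of_le (by linarith) hMε_ge
  -- lower bound: Mε ≤ s for all feasible s
  have hlow : ∀ s ∈ smoothRenyiVals α ε P, Mε ≤ s := by
    rintro s ⟨Q, hQ, hQmass, hQαs, rfl⟩
    have hQ0 : ∀ x, 0 ≤ Q x := fun x => (hQ x).1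
    have hQP : ∀ x, Q x ≤ P x := fun x => (hQ x).2
    have hQsum : Summable Q := Summable.of_nonneg_of_le hQ0 hQP hPsum
    have hQv_le : ∀ x, Q x * v x ≤ Q x ^ α := by
      intro x
      rcases (hQ0 x).eq_or_lt with h | h
      · rw [← h, zero_mul, Real.zero_rpow hα0.ne']
      · have h2 : v x ≤ Q x ^ (α - 1) :=
          Real.rpow_le_rpow_of_nonpos h (hQP x) hαm1'
        calc Q x * v x ≤ Q x * Q x ^ (α - 1) :=
              mul_le_mul_of_nonneg_left h2 (hQ0 x)
          _ = Q x ^ α := by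
              rw [show Q x * Q x ^ (α-1) = Q x ^ (1:ℝ) * Q x ^ (α-1) by rw [Real.rpow_one],
                ← Real.rpow_add h]; norm_num
    have hQv0 : ∀ x, 0 ≤ Q x * v x := fun x => mul_nonneg (hQ0 x) (hv0 x)
    have hQv_sum : Summable (fun x => Q x * v x) :=
      Summable.of_nonneg_of_le hQv0 hQv_le hQαs
    have key : ∀ x, w x * v x + η * (Q x - w x) ≤ Q x * v x := by
      intro x
      rcases lt_trichotomy (v x) η with h | h | h
      · have hw : w x = P x := by simp [hwdef, h]
        rw [hw]
        linarith [mul_le_mul_of_nonneg_left h.le (sub_nonneg.mpr (hQP x))]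
      · have hw : w x = (1-β) * P x := by simp [hwdef, h, lt_irrefl]
        rw [hw, ← h]; ring_nf; rfl
      · have hw : w x = 0 := by simp [hwdef, h.ne', not_lt.mpr h.le]
        rw [hw]
        linarith [mul_le_mul_of_nonneg_left h.le (hQ0 x)]
    have hsum_left : Summable (fun x => w x * v x + η * (Q x - w x)) :=
      hwv_sum.add ((hQsum.sub hw_sum).mul_left η)
    have h1 := Summable.tsum_le_tsum key hsum_left hQv_sum
    rw [Summable.tsum_add hwv_sum ((hQsum.sub hw_sum).mul_left η), tsum_mul_left,
      Summable.tsum_sub hQsum hw_sum, htsum_w] at h1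
    have h2 := Summable.tsum_le_tsum hQv_le hQv_sum hQαs
    have h3 : 0 ≤ η * ((∑' x, Q x) - (1 - ε)) :=
      mul_nonneg hη0 (by linarith)
    rw [hMw]
    linarith
  -- η is positive
  have hηpos : 0 < η := by
    rcases hη0.eq_or_lt with h | h
    · exfalso
      have hwz : ∀ x, w x = 0 := by
        intro x
        rcases (hP x).eq_or_lt with hx | hx
        · simp only [hwdef]
          split_ifs <;> simp [← hx]
        · have := hvpos x hx
          simp only [hwdef]
          rw [if_neg (by rw [← h]; exact not_lt.mpr (hv0 x)),
            if_neg (by rw [← h]; exact (hvpos x hx).ne')]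
      have : ∑' x, w x = 0 := by simp [tsum_congr hwz]
      rw [htsum_w] at this; linarith
    · exact h
  -- structure of the level set {v = η}
  set c : ℝ := η ^ (α - 1)⁻¹ with hcdef
  have hc0 : 0 < c := Real.rpow_pos_of_pos hηpos _
  have hcη : c ^ (α - 1) = η := Real.rpow_inv_rpow hη0 hαm1
  have hEc : ∀ x, v x = η → P x = c := by
    intro x hx
    have hPx : 0 < P x := by
      rcases (hP x).eq_or_lt with h | h
      · exact absurd (hx ▸ hvzero x h.symm) hηpos.ne'
      · exact h
    have h2 : (P x ^ (α-1)) ^ (α-1)⁻¹ = P x := Real.rpow_rpow_inv (hP x) hαm1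
    have hx' : P x ^ (α-1) = η := hx
    rw [← h2, hcdef, hx']
  have hEfin : {x : X | v x = η}.Finite := by
    have h1 : ∀ᶠ x in Filter.cofinite, P x < c :=
      hPsum.tendsto_cofinite_zero.eventually_lt_const hc0
    refine (Filter.eventually_cofinite.mp h1).subset ?_
    intro x hx
    simp only [Set.mem_setOf_eq] at hx ⊢
    rw [hEc x hx]; exact lt_irrefl c
  set F : Finset X := hEfin.toFinset with hFdef
  have hFmem : ∀ x, x ∈ F ↔ v x = η := by
    intro x; simp [hFdef, Set.Finite.mem_toFinset]
  set n : ℕ := F.card with hndef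
  have hfE_val : ∀ x, fE x = if x ∈ F then c else 0 := by
    intro x
    simp only [hfE]
    by_cases h : v x = η
    · rw [if_pos h, if_pos ((hFmem x).mpr h), hEc x h]
    · rw [if_neg h, if_neg (fun hh => h ((hFmem x).mp hh))]
  have hpE : ∑' x, fE x = n * c := by
    rw [tsum_congr hfE_val, tsum_eq_sum (s := F) (fun x hx => if_neg hx)]
    rw [Finset.sum_ite_mem, Finset.inter_self, Finset.sum_const, nsmul_eq_mul]
  set k : ℕ := ⌈(1-β) * n⌉₊ with hkdef
  have hkn : k ≤ n := Nat.ceil_le.mpr (by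
    calc (1-β) * (n:ℝ) ≤ 1 * (n:ℝ) :=
          mul_le_mul_of_nonneg_right (by linarith) (Nat.cast_nonneg n)
      _ = (n:ℝ) := one_mul _)
  have hk_ge : (1-β) * n ≤ k := Nat.le_ceil _
  have hk_le : (k:ℝ) ≤ (1-β) * n + 1 :=
    (Nat.ceil_lt_add_one (mul_nonneg hβ1' (Nat.cast_nonneg n))).le
  obtain ⟨F', hF'sub, hF'card⟩ := Finset.exists_subset_card_eq hkn
  have hF'c : ∀ x ∈ F', P x = c := fun x hx => hEc x ((hFmem x).mp (hF'sub hx))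
  -- the candidate Q
  set Q : X → ℝ := fun x => if v x < η then P x else if x ∈ F' then P x else 0 with hQdef
  have hQ1 : ∀ x, 0 ≤ Q x ∧ Q x ≤ P x := by
    intro x; simp only [hQdef]
    split_ifs <;> constructor <;> first | exact hP x | exact le_refl _
  have hnotA : ∀ x ∈ F', ¬ v x < η := by
    intro x hx
    rw [(hFmem x).mp (hF'sub hx)]; exact lt_irrefl η
  have hQsplit : ∀ x, Q x = fA x + (if x ∈ F' then P x else 0) := by
    intro x
    simp only [hQdef, hfA]
    by_cases h : v x < η
    · rw [if_pos h, if_pos h, if_neg (fun hh => hnotA x hh h), add_zero]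
    · rw [if_neg h, if_neg h, zero_add]
  have hindF' : Summable (fun x => if x ∈ F' then P x else 0) :=
    summable_of_ne_finset_zero (s := F') (fun x hx => if_neg hx)
  have hQsum : Summable Q := by
    rw [show Q = fun x => fA x + (if x ∈ F' then P x else 0) from funext hQsplit]
    exact hfAs.add hindF'
  have hsumF' : ∑' x, (if x ∈ F' then P x else 0) = k * c := by
    rw [tsum_eq_sum (s := F') (fun x hx => if_neg hx)]
    rw [Finset.sum_ite_mem, Finset.inter_self,
      Finset.sum_congr rfl hF'c, Finset.sum_const, hF'card, nsmul_eq_mul]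
  have hQmass : 1 - ε ≤ ∑' x, Q x := by
    rw [tsum_congr hQsplit, Summable.tsum_add hfAs hindF', hsumF']
    have h1 : (1-β) * (n * c) ≤ k * c := by
      rw [← mul_assoc]
      exact mul_le_mul_of_nonneg_right hk_ge hc0.le
    have h2 : ∑' x, w x = (∑' x, fA x) + (1-β) * (n * c) := by
      rw [tsum_congr hw_eq, Summable.tsum_add hfAs (hfEs.mul_left _), tsum_mul_left, hpE]
    rw [← htsum_w, h2]
    linarith
  -- Q^α pointwise
  set fAα : X → ℝ := fun x => if v x < η then P x ^ α else 0 with hfAαdef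
  have hfAα0 : ∀ x, 0 ≤ fAα x := by
    intro x; simp only [hfAαdef]; split
    · exact Real.rpow_nonneg (hP x) _
    · exact le_refl 0
  have hfAα_le : ∀ x, fAα x ≤ η * P x := by
    intro x; simp only [hfAαdef]
    split_ifs with h
    · rw [← hPv, mul_comm]
      exact mul_le_mul_of_nonneg_right h.le (hP x)
    · exact mul_nonneg hη0 (hP x)
  have hfAαs : Summable fAα :=
    Summable.of_nonneg_of_le hfAα0 hfAα_le (hPsum.mul_left η)
  have hQα_split : ∀ x, Q x ^ α = fAα x + (if x ∈ F' then c ^ α else 0) := by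
    intro x
    simp only [hQdef, hfAαdef]
    by_cases h : v x < η
    · rw [if_pos h, if_pos h, if_neg (fun hh => hnotA x hh h), add_zero]
    · rw [if_neg h, if_neg h, zero_add]
      by_cases h2 : x ∈ F'
      · rw [if_pos h2, if_pos h2, hF'c x h2]
      · rw [if_neg h2, if_neg h2, Real.zero_rpow hα0.ne']
  have hindF'α : Summable (fun x => if x ∈ F' then c ^ α else 0) :=
    summable_of_ne_finset_zero (s := F') (fun x hx => if_neg hx)
  have hQαs : Summable (fun x => Q x ^ α) := by
    rw [show (fun x => Q x ^ α) = fun x => fAα x + (if x ∈ F' then c ^ α else 0)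
      from funext hQα_split]
    exact hfAαs.add hindF'α
  have hsumF'α : ∑' x, (if x ∈ F' then c ^ α else 0) = k * c ^ α := by
    rw [tsum_eq_sum (s := F') (fun x hx => if_neg hx)]
    rw [Finset.sum_ite_mem, Finset.inter_self, Finset.sum_const, hF'card, nsmul_eq_mul]
  have hQα_val : ∑' x, Q x ^ α = (∑' x, fAα x) + k * c ^ α := by
    rw [tsum_congr hQα_split, Summable.tsum_add hfAαs hindF'α, hsumF'α]
  -- Mε in the same terms
  have hηc : η * c = c ^ α := by
    have h2 : c ^ α = c ^ ((α - 1) + 1) := by norm_num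
    rw [h2, Real.rpow_add hc0, Real.rpow_one, hcη]
  have hMε_val : Mε = (∑' x, fAα x) + (1-β) * (n * c ^ α) := by
    have hwv_split : ∀ x, w x * v x = fAα x + ((1-β) * η) * fE x := by
      intro x
      rcases lt_trichotomy (v x) η with h | h | h
      · have e1 : w x = P x := by simp only [hwdef]; rw [if_pos h]
        have e2 : fAα x = P x ^ α := by simp only [hfAαdef]; rw [if_pos h]
        have e3 : fE x = 0 := by simp only [hfE]; rw [if_neg h.ne]
        rw [e1, e2, e3, hPv x]; ring
      · have hnl : ¬ v x < η := by rw [h]; exact lt_irrefl η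
        have e1 : w x = (1-β) * P x := by simp only [hwdef]; rw [if_neg hnl, if_pos h]
        have e2 : fAα x = 0 := by simp only [hfAαdef]; rw [if_neg hnl]
        have e3 : fE x = P x := by simp only [hfE]; rw [if_pos h]
        rw [e1, e2, e3, ← h]; ring
      · have e1 : w x = 0 := by
          simp only [hwdef]; rw [if_neg (not_lt.mpr h.le), if_neg h.ne']
        have e2 : fAα x = 0 := by simp only [hfAαdef]; rw [if_neg (not_lt.mpr h.le)]
        have e3 : fE x = 0 := by simp only [hfE]; rw [if_neg h.ne']
        rw [e1, e2, e3]; ring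
    rw [hMw, tsum_congr hwv_split, Summable.tsum_add hfAαs (hfEs.mul_left _), tsum_mul_left, hpE]
    have h3 : ((1-β)*η) * ((n:ℝ)*c) = (1-β)*((n:ℝ)*c^α) := by rw [← hηc]; ring
    linarith [h3]
  -- the upper bound Mε + 1
  have hub : ∑' x, Q x ^ α ≤ Mε + 1 := by
    rw [hQα_val, hMε_val]
    rcases Nat.eq_zero_or_pos n with hn | hn
    · have hk0' : k = 0 := Nat.le_zero.mp (by rw [← hn]; exact hkn)
      have hk0 : (k:ℝ) = 0 := by exact_mod_cast hk0'
      have hn0 : (n:ℝ) = 0 := by exact_mod_cast hn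
      rw [hk0, hn0]
      linarith
    · have hFne : F.Nonempty := Finset.card_pos.mp hn
      obtain ⟨x₀, hx₀⟩ := hFne
      have hc1 : c ≤ 1 := by
        rw [← hEc x₀ ((hFmem x₀).mp hx₀)]; exact hP1 x₀
      have hcα1 : c ^ α ≤ 1 := Real.rpow_le_one hc0.le hc1 hα0.le
      have hcα0 : 0 ≤ c ^ α := Real.rpow_nonneg hc0.le _
      have h5 : (k:ℝ) * c^α ≤ ((1-β)*(n:ℝ) + 1) * c^α :=
        mul_le_mul_of_nonneg_right hk_le hcα0
      linarith [h5, hcα1]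
  have hmem : (∑' x, Q x ^ α) ∈ smoothRenyiVals α ε P := ⟨Q, hQ1, hQmass, hQαs, rfl⟩
  have hSne : (smoothRenyiVals α ε P).Nonempty := ⟨_, hmem⟩
  have hbdd : BddBelow (smoothRenyiVals α ε P) := ⟨Mε, fun s hs => hlow s hs⟩
  have hInf_ge : Mε ≤ sInf (smoothRenyiVals α ε P) := le_csInf hSne hlow
  have hInf_le : sInf (smoothRenyiVals α ε P) ≤ Mε + 1 :=
    (csInf_le hbdd hmem).trans hub
  have hInfpos : 0 < sInf (smoothRenyiVals α ε P) := lt_of_lt_of_le hMε_pos hInf_ge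
  have hk₀ : (0:ℝ) ≤ 1 / (1 - α) := by positivity
  have h12 : (1:ℝ) < 2 := one_lt_two
  refine ⟨?_, ?_, ?_⟩
  · rw [hHsm]
    exact mul_le_mul_of_nonneg_left
      (Real.logb_le_logb_of_le h12 hMε_pos hInf_ge) hk₀
  · rw [hHsm]
    exact mul_le_mul_of_nonneg_left
      (Real.logb_le_logb_of_le h12 hInfpos hInf_le) hk₀
  · intro hcond
    -- Nonempty X and sup bound
    have hXne : Nonempty X := by
      by_contra h
      rw [not_nonempty_iff] at h
      exact one_ne_zero (hsum.unique hasSum_empty)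
    set s₀ : ℝ := ⨆ x, P x with hs₀def
    have hbddA : BddAbove (Set.range P) := ⟨1, by rintro _ ⟨x, rfl⟩; exact hP1 x⟩
    have hs₀le : ∀ x, P x ≤ s₀ := fun x => le_ciSup hbddA x
    have hs₀pos : 0 < s₀ := by
      obtain ⟨x, hx⟩ : ∃ x, 0 < P x := by
        by_contra h
        push_neg at h
        have : P = 0 := funext fun x => le_antisymm (h x) (hP x)
        rw [this] at hsum
        exact one_ne_zero (hsum.unique hasSum_zero)
      exact lt_of_lt_of_le hx (hs₀le x)
    have hpow : (2:ℝ) ^ ((1 - α) * Hinf) = s₀ ^ (α - 1) := by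
      have e1 : (2:ℝ) ^ ((1 - α) * Hinf) = ((2:ℝ) ^ Hinf) ^ (1 - α) := by
        rw [mul_comm, Real.rpow_mul (by norm_num : (0:ℝ) ≤ 2)]
      have e2 : (2:ℝ) ^ Hinf = s₀⁻¹ := by
        rw [hHinf, one_div]
        exact Real.rpow_logb (by norm_num) (by norm_num) (inv_pos.mpr hs₀pos)
      rw [e1, e2, ← Real.rpow_neg_one s₀, ← Real.rpow_mul hs₀pos.le]
      congr 1
      ring
    have hwv_ge2 : ∀ x, w x * s₀ ^ (α - 1) ≤ w x * v x := by
      intro x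
      rcases (hw0 x).eq_or_lt with h | h
      · rw [← h, zero_mul, zero_mul]
      · have hPx : 0 < P x := lt_of_lt_of_le h (hwP x)
        exact mul_le_mul_of_nonneg_left
          (Real.rpow_le_rpow_of_nonpos hPx (hs₀le x) hαm1') h.le
    have hM1 : (1 - ε) * s₀ ^ (α - 1) ≤ Mε := by
      have h1 := Summable.tsum_le_tsum hwv_ge2 (hw_sum.mul_right _) hwv_sum
      rw [tsum_mul_right, htsum_w] at h1
      rw [hMw]; exact h1
    rw [hpow] at hcond
    have hMε1 : 1 < Mε := lt_of_lt_of_le hcond hM1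
    have h2M : sInf (smoothRenyiVals α ε P) ≤ 2 * Mε := by linarith
    rw [hHsm]
    have hlog : Real.logb 2 (sInf (smoothRenyiVals α ε P)) ≤
        Real.logb 2 2 + Real.logb 2 Mε := by
      have := Real.logb_le_logb_of_le h12 hInfpos h2M
      rwa [Real.logb_mul (by norm_num) hMε_pos.ne'] at this
    have h6 := mul_le_mul_of_nonneg_left hlog hk₀
    linarith [h6]
end

section
/- Markov-type bound on the size of the smoothing set: Let P be a pmf on a countable set 𝒳 with finite Shannon entropy H(P), let 0 < ε < 1, let σ : ℕ → 𝒳 enumerate 𝒳 in decreasing order of probability, and let J = sup{ j ≥ 0 : ∑_{k=1}^{j} P(σ(k)) < 1 − ε }. If J is finite then log(J + 1) ≤ H(P)/ε. -/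
/-!
Let `g k = P (σ k)` and `p = g J`. Since the first `J` masses sum to less than `1 - ε`, the tail
`∑_{k ≥ J} g k` exceeds `ε`, so `p > 0`. Every one of the first `J + 1` masses is at least `p`,
hence `(J + 1) p ≤ 1`. Every mass in the tail is at most `p`, so its entropy term is at least
`g k · log₂ (1/p)`; summing over the tail (Markov's inequality) gives `ε · log₂ (1/p) ≤ H`.
Together, `log₂ (J + 1) ≤ log₂ (1/p) ≤ H / ε`.
-/

open Real Finset

section

variable {b : ℝ}

lemma mul_logb_one_div_nonneg (hb : 1 < b) {q : ℝ} (hq0 : 0 ≤ q) (hq1 : q ≤ 1) :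
    0 ≤ q * logb b (1 / q) := by
  rw [one_div, logb_inv]
  exact mul_nonneg hq0 (neg_nonneg.2 (logb_nonpos hb hq0 hq1))

lemma mul_logb_one_div_le_of_le (hb : 1 < b) {p q : ℝ} (hq0 : 0 ≤ q) (hqp : q ≤ p) :
    q * logb b (1 / p) ≤ q * logb b (1 / q) := by
  rcases hq0.eq_or_lt with rfl | hq
  · simp
  · refine mul_le_mul_of_nonneg_left ?_ hq.le
    exact logb_le_logb_of_le hb (one_div_pos.2 (hq.trans_le hqp)) (one_div_le_one_div_of_le hq hqp)

lemma logb_one_div_mul_tsum_tail_le {g : ℕ → ℝ} (hb : 1 < b) (hg0 : ∀ k, 0 ≤ g k)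
    (hg1 : ∀ k, g k ≤ 1) (hanti : Antitone g) (hg : Summable g)
    (hent : Summable fun k => g k * logb b (1 / g k)) (n : ℕ) :
    logb b (1 / g n) * ∑' k, g (k + n) ≤ ∑' k, g k * logb b (1 / g k) :=
  calc logb b (1 / g n) * ∑' k, g (k + n) = ∑' k, g (k + n) * logb b (1 / g n) := by
        rw [← tsum_mul_left]; simp_rw [mul_comm]
    _ ≤ ∑' k, g (k + n) * logb b (1 / g (k + n)) :=
        Summable.tsum_le_tsum
          (fun k => mul_logb_one_div_le_of_le hb (hg0 _) (hanti (Nat.le_add_left n k)))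
          (((summable_nat_add_iff n).2 hg).mul_right _) ((summable_nat_add_iff n).2 hent)
    _ ≤ ∑' k, g k * logb b (1 / g k) := by
        rw [← hent.sum_add_tsum_nat_add n]
        exact le_add_of_nonneg_left
          (sum_nonneg fun k _ => mul_logb_one_div_nonneg hb (hg0 k) (hg1 k))

end

lemma succ_mul_le_of_antitone_of_hasSum {g : ℕ → ℝ} {a : ℝ} (hg0 : ∀ k, 0 ≤ g k)
    (hanti : Antitone g) (hg : HasSum g a) (n : ℕ) :
    ((n : ℝ) + 1) * g n ≤ a :=
  calc ((n : ℝ) + 1) * g n = #(range (n + 1)) • g n := by simp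
    _ ≤ ∑ k ∈ range (n + 1), g k :=
        card_nsmul_le_sum _ _ _ fun k hk => hanti (Nat.lt_succ_iff.1 (mem_range.1 hk))
    _ ≤ a := sum_le_hasSum _ (fun k _ => hg0 k) hg

theorem log_smoothing_set_size_le_general {X : Type*}
    (P : X → ℝ) (σ : ℕ ≃ X) (ε H : ℝ) (J : ℕ)
    (hP : ∀ x, 0 ≤ P x) (hsum : HasSum P 1)
    (hdec : ∀ m n : ℕ, m ≤ n → P (σ n) ≤ P (σ m))
    (hε0 : 0 < ε)
    (hH : H = ∑' x, P x * Real.logb 2 (1 / P x))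
    (hHsum : Summable fun x => P x * Real.logb 2 (1 / P x))
    (hJ1 : ∑ k ∈ Finset.range J, P (σ k) < 1 - ε) :
    Real.logb 2 ((J : ℝ) + 1) ≤ H / ε := by
  set g : ℕ → ℝ := fun k => P (σ k)
  have hanti : Antitone g := hdec
  have hg0 : ∀ k, 0 ≤ g k := fun k => hP _
  have hg1 : ∀ k, g k ≤ 1 := fun k => le_hasSum hsum _ fun x _ => hP x
  have hg : HasSum g 1 := σ.hasSum_iff.2 hsum
  have hent : ∑' k, g k * logb 2 (1 / g k) = H :=
    hH ▸ σ.tsum_eq fun x => P x * logb 2 (1 / P x)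
  have htail : ε < ∑' k, g (k + J) := by
    have := hg.summable.sum_add_tsum_nat_add J
    rw [hg.tsum_eq] at this
    linarith
  have hpos : 0 < g J := by
    by_contra! h
    have hzero : ∀ k, g (k + J) = 0 :=
      fun k => le_antisymm ((hanti (Nat.le_add_left J k)).trans h) (hg0 _)
    simp only [hzero, tsum_zero] at htail
    linarith
  have hcount : logb 2 ((J : ℝ) + 1) ≤ logb 2 (1 / g J) :=
    logb_le_logb_of_le one_lt_two (by positivity)
      ((le_div_iff₀ hpos).2 (succ_mul_le_of_antitone_of_hasSum hg0 hanti hg J))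
  have hmarkov : logb 2 (1 / g J) * ∑' k, g (k + J) ≤ H :=
    hent ▸ logb_one_div_mul_tsum_tail_le one_lt_two hg0 hg1 hanti hg.summable
      (σ.summable_iff.2 hHsum) J
  have hlog_nonneg : 0 ≤ logb 2 (1 / g J) :=
    logb_nonneg one_lt_two ((one_le_div hpos).2 (hg1 J))
  calc logb 2 ((J : ℝ) + 1) ≤ logb 2 (1 / g J) := hcount
    _ ≤ H / ε :=
        (le_div_iff₀ hε0).2 ((mul_le_mul_of_nonneg_left htail.le hlog_nonneg).trans hmarkov)

/-- Markov-type bound on the size of the smoothing set: if `σ` enumerates the pmf `P`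
in decreasing order and `J` is the largest `j` with `∑_{k<j} P(σ k) < 1 − ε`, then
`log₂(J + 1) ≤ H(P)/ε`. -/
theorem log_smoothing_set_size_le {X : Type*} [Countable X]
    (P : X → ℝ) (σ : ℕ ≃ X) (ε H : ℝ) (J : ℕ)
    (hP : ∀ x, 0 ≤ P x) (hsum : HasSum P 1)
    (hdec : ∀ m n : ℕ, m ≤ n → P (σ n) ≤ P (σ m))
    (hε0 : 0 < ε) (hε1 : ε < 1)
    (hH : H = ∑' x, P x * Real.logb 2 (1 / P x))
    (hHsum : Summable fun x => P x * Real.logb 2 (1 / P x))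
    (hJ1 : ∑ k ∈ Finset.range J, P (σ k) < 1 - ε)
    (hJ2 : 1 - ε ≤ ∑ k ∈ Finset.range (J + 1), P (σ k)) :
    Real.logb 2 ((J : ℝ) + 1) ≤ H / ε :=
  log_smoothing_set_size_le_general P σ ε H J hP hsum hdec hε0 hH hHsum hJ1
end
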